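/- arXiv:2509.22618 — 8 statements merged into one kernel-verified Lean document; each statement's English description precedes it below -/
import Mathlib

section
/- For every positive integer n, the total number of parts N^q_A(n) counted over all partitions of n into distinct parts from a set A of positive integers satisfies N^q_A(n) = Σ_{k=0}^{n-1} q_A(k) · τ^s_A(n−k), where q_A(k) is the number of partitions of k into distinct parts from A (with q_A(0)=1) and τ^s_A(m) = Σ_{a∈A, a∣m} (−1)^{m/a − 1}. -/
open scoped Classical
open Finset

/-- Total number of parts over all partitions of `n` with parts from `A`. -/
noncomputable def NpA (A : Set ℕ) (n : ℕ) : ℕ :=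
  ∑ p : n.Partition, if ∀ x ∈ p.parts, x ∈ A then p.parts.card else 0

/-- Number of partitions of `n` with parts from `A`. -/
noncomputable def pA (A : Set ℕ) (n : ℕ) : ℕ :=
  ∑ p : n.Partition, if ∀ x ∈ p.parts, x ∈ A then 1 else 0

/-- Total number of parts over all partitions of `n` into distinct parts from `A`. -/
noncomputable def NqA (A : Set ℕ) (n : ℕ) : ℕ :=
  ∑ p : n.Partition, if (∀ x ∈ p.parts, x ∈ A) ∧ p.parts.Nodup then p.parts.card else 0

/-- Number of partitions of `n` into distinct parts from `A`. -/
noncomputable def qA (A : Set ℕ) (n : ℕ) : ℕ :=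
  ∑ p : n.Partition, if (∀ x ∈ p.parts, x ∈ A) ∧ p.parts.Nodup then 1 else 0

/-- Number of divisors of `m` lying in `A`. -/
noncomputable def tauA (A : Set ℕ) (m : ℕ) : ℕ :=
  (m.divisors.filter (· ∈ A)).card

/-- Sum of divisors of `m` lying in `A`. -/
noncomputable def sigmaA (A : Set ℕ) (m : ℕ) : ℕ :=
  ∑ a ∈ m.divisors.filter (· ∈ A), a

/-- Signed divisor count `τ^s_A(m) = Σ_{a ∈ A, a ∣ m} (-1)^(m/a - 1)`. -/
noncomputable def tauSA (A : Set ℕ) (m : ℕ) : ℤ :=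
  ∑ a ∈ m.divisors.filter (· ∈ A), (-1 : ℤ) ^ (m / a - 1)

/-- Signed divisor sum `σ^s_A(m) = Σ_{a ∈ A, a ∣ m} (-1)^(m/a - 1) a`. -/
noncomputable def sigmaSA (A : Set ℕ) (m : ℕ) : ℤ :=
  ∑ a ∈ m.divisors.filter (· ∈ A), (-1 : ℤ) ^ (m / a - 1) * (a : ℤ)

/-- Number of partitions of `n` into an even number of distinct parts from `A`. -/
noncomputable def qeA (A : Set ℕ) (n : ℕ) : ℕ :=
  ∑ p : n.Partition,
    if (∀ x ∈ p.parts, x ∈ A) ∧ p.parts.Nodup ∧ Even p.parts.card then 1 else 0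

/-- Number of partitions of `n` into an odd number of distinct parts from `A`. -/
noncomputable def qoA (A : Set ℕ) (n : ℕ) : ℕ :=
  ∑ p : n.Partition,
    if (∀ x ∈ p.parts, x ∈ A) ∧ p.parts.Nodup ∧ Odd p.parts.card then 1 else 0

/-- Number of partitions of `n` into an even number of parts from `A`. -/
noncomputable def peA (A : Set ℕ) (n : ℕ) : ℕ :=
  ∑ p : n.Partition, if (∀ x ∈ p.parts, x ∈ A) ∧ Even p.parts.card then 1 else 0

/-- Number of partitions of `n` into an odd number of parts from `A`. -/
noncomputable def poA (A : Set ℕ) (n : ℕ) : ℕ :=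
  ∑ p : n.Partition, if (∀ x ∈ p.parts, x ∈ A) ∧ Odd p.parts.card then 1 else 0

/-- Hamming weight: number of ones in the binary expansion of `n`. -/
def hw (n : ℕ) : ℕ := (Nat.digits 2 n).sum

/-- Number of Carlitz compositions of `m` with parts from `A`
(sequences of elements of `A` summing to `m` with no two adjacent parts equal). -/
noncomputable def clA (A : Set ℕ) (m : ℕ) : ℕ :=
  Nat.card {l : List ℕ // (∀ x ∈ l, x ∈ A) ∧ l.sum = m ∧ l.Chain' (· ≠ ·)}

/-- The set of powers of two. -/
def binA : Set ℕ := {m | ∃ j : ℕ, m = 2 ^ j}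

/-- Pentagonal-number weight: `ω(0)=1`, `ω(j(3j±1)/2)=(-1)^j` for `j ≥ 1`, else `0`. -/
def omegaP (m : ℕ) : ℤ :=
  if m = 0 then 1
  else ∑ j ∈ Finset.range (m + 1),
    if 2 * m = j * (3 * j + 1) ∨ 2 * m = j * (3 * j - 1) then (-1 : ℤ) ^ j else 0

section Aux

/-- Number of distinct A-partitions of `m` containing the part `a`. -/
noncomputable def fAux (A : Set ℕ) (a m : ℕ) : ℕ :=
  ∑ p : m.Partition,
    if ((∀ x ∈ p.parts, x ∈ A) ∧ p.parts.Nodup) ∧ a ∈ p.parts then 1 else 0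

/-- Number of distinct A-partitions of `m` not containing the part `a`. -/
noncomputable def gAux (A : Set ℕ) (a m : ℕ) : ℕ :=
  ∑ p : m.Partition,
    if ((∀ x ∈ p.parts, x ∈ A) ∧ p.parts.Nodup) ∧ a ∉ p.parts then 1 else 0

lemma qA_split (A : Set ℕ) (a k : ℕ) : qA A k = fAux A a k + gAux A a k := by
  unfold qA fAux gAux
  rw [← Finset.sum_add_distrib]
  refine Finset.sum_congr rfl fun p _ => ?_
  by_cases h1 : (∀ x ∈ p.parts, x ∈ A) ∧ p.parts.Nodup <;>
    by_cases h2 : a ∈ p.parts <;> simp [h1, h2]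

/-- Erase a part `a` from a partition of `m` containing it. -/
def eraseP {m : ℕ} (a : ℕ) (p : m.Partition) (h : a ∈ p.parts) : (m - a).Partition where
  parts := p.parts.erase a
  parts_pos := fun hi => p.parts_pos (Multiset.mem_of_mem_erase hi)
  parts_sum := by
    have h2 : a + (p.parts.erase a).sum = m := by
      rw [← Multiset.sum_cons, Multiset.cons_erase h, p.parts_sum]
    omega

/-- Add a part `a` to a partition of `m - a`. -/
def consP {m : ℕ} (a : ℕ) (ha : 0 < a) (ham : a ≤ m) (p : (m - a).Partition) :
    m.Partition where
  parts := a ::ₘ p.parts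
  parts_pos := fun hi => by
    rcases Multiset.mem_cons.mp hi with h | h
    · exact h ▸ ha
    · exact p.parts_pos h
  parts_sum := by rw [Multiset.sum_cons, p.parts_sum]; omega

lemma fAux_eq_gAux (A : Set ℕ) {a m : ℕ} (haA : a ∈ A) (ha : 0 < a) (ham : a ≤ m) :
    fAux A a m = gAux A a (m - a) := by
  unfold fAux gAux
  rw [← Finset.card_filter, ← Finset.card_filter]
  refine Finset.card_bij'
    (fun p hp => eraseP a p (by
      simp only [Finset.mem_filter] at hp; exact hp.2.2))
    (fun q hq => consP a ha ham q) ?_ ?_ ?_ ?_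
  · intro p hp
    simp only [Finset.mem_filter, Finset.mem_univ, true_and] at hp ⊢
    obtain ⟨⟨hpA, hpn⟩, hmem⟩ := hp
    refine ⟨⟨fun x hx => hpA x (Multiset.mem_of_mem_erase hx), hpn.erase a⟩, ?_⟩
    exact hpn.notMem_erase
  · intro q hq
    simp only [Finset.mem_filter, Finset.mem_univ, true_and] at hq ⊢
    obtain ⟨⟨hqA, hqn⟩, hmem⟩ := hq
    refine ⟨⟨fun x hx => ?_, ?_⟩, Multiset.mem_cons_self a _⟩
    · rcases Multiset.mem_cons.mp hx with h | h
      · exact h ▸ haA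
      · exact hqA x h
    · exact Multiset.nodup_cons.mpr ⟨hmem, hqn⟩
  · intro p hp
    apply Nat.Partition.ext
    simp only [Finset.mem_filter, Finset.mem_univ, true_and] at hp
    exact Multiset.cons_erase hp.2
  · intro q hq
    apply Nat.Partition.ext
    exact Multiset.erase_cons_head a q.parts

lemma fAux_of_lt (A : Set ℕ) {a m : ℕ} (h : m < a) : fAux A a m = 0 := by
  refine Finset.sum_eq_zero fun p _ => ?_
  rw [if_neg]
  rintro ⟨-, hmem⟩
  have h1 := Multiset.single_le_sum (fun x _ => Nat.zero_le x) a hmem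
  rw [p.parts_sum] at h1
  omega

lemma fAux_notMem (A : Set ℕ) {a : ℕ} (haA : a ∉ A) (m : ℕ) : fAux A a m = 0 := by
  refine Finset.sum_eq_zero fun p _ => ?_
  rw [if_neg]
  rintro ⟨⟨hpA, -⟩, hmem⟩
  exact haA (hpA a hmem)

lemma fAux_formula (A : Set ℕ) {a : ℕ} (haA : a ∈ A) (ha : 0 < a) (n : ℕ) :
    (fAux A a n : ℤ) =
      ∑ j ∈ Finset.range (n / a), (-1 : ℤ) ^ j * (qA A (n - (j + 1) * a) : ℤ) := by
  induction n using Nat.strong_induction_on with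
  | _ n IH =>
    by_cases h : a ≤ n
    · have hs : fAux A a n = gAux A a (n - a) := fAux_eq_gAux A haA ha h
      have hq : (qA A (n - a) : ℤ) = (fAux A a (n - a) : ℤ) + (gAux A a (n - a) : ℤ) := by
        exact_mod_cast congrArg (Nat.cast (R := ℤ)) (qA_split A a (n - a))
      have hd : n / a = (n - a) / a + 1 := Nat.div_eq_sub_div ha h
      rw [hd]
      simp only [Finset.sum_range_succ']
      have e1 : (∑ j ∈ Finset.range ((n - a) / a),
            (-1 : ℤ) ^ (j + 1) * (qA A (n - (j + 1 + 1) * a) : ℤ))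
          = -(fAux A a (n - a) : ℤ) := by
        rw [IH (n - a) (by omega), ← Finset.sum_neg_distrib]
        refine Finset.sum_congr rfl fun j hj => ?_
        have h2 : (j + 1 + 1) * a = a + (j + 1) * a := by ring
        rw [h2, ← Nat.sub_sub, pow_succ]
        ring
      rw [e1]
      have h3 : (0 + 1) * a = a := by ring
      rw [h3, pow_zero, one_mul, hs]
      omega
    · have h1 : n / a = 0 := Nat.div_eq_of_lt (by omega)
      rw [h1, fAux_of_lt A (by omega)]
      simp

lemma NqA_eq_sum_fAux (A : Set ℕ) (n : ℕ) :
    NqA A n = ∑ a ∈ Finset.range (n + 1), fAux A a n := by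
  have key : ∀ p : n.Partition,
      (if (∀ x ∈ p.parts, x ∈ A) ∧ p.parts.Nodup then (Multiset.card p.parts) else 0)
        = ∑ a ∈ Finset.range (n + 1),
            if ((∀ x ∈ p.parts, x ∈ A) ∧ p.parts.Nodup) ∧ a ∈ p.parts then 1 else 0 := by
    intro p
    by_cases hc : (∀ x ∈ p.parts, x ∈ A) ∧ p.parts.Nodup
    · rw [if_pos hc,
        Finset.sum_congr rfl (fun a _ => if_congr (and_iff_right hc) rfl rfl),
        ← Finset.card_filter]
      have hf : Finset.filter (fun a => a ∈ p.parts) (Finset.range (n + 1))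
          = p.parts.toFinset := by
        ext x
        simp only [Finset.mem_filter, Finset.mem_range, Multiset.mem_toFinset]
        constructor
        · tauto
        · intro hx
          refine ⟨?_, hx⟩
          have h1 := Multiset.single_le_sum (fun y _ => Nat.zero_le y) x hx
          rw [p.parts_sum] at h1
          omega
      rw [hf, Multiset.toFinset_card_of_nodup hc.2]
    · simp [hc]
  unfold NqA fAux
  rw [Finset.sum_congr rfl fun p _ => key p]
  exact Finset.sum_comm

end Aux

theorem stmt1 (A : Set ℕ) (hA : ∀ a ∈ A, 0 < a) (n : ℕ) (hn : 0 < n) :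
    (NqA A n : ℤ) = ∑ k ∈ Finset.range n, (qA A k : ℤ) * tauSA A (n - k) := by
  have hL : (NqA A n : ℤ) = ∑ a ∈ Finset.range (n + 1), (fAux A a n : ℤ) := by
    rw [NqA_eq_sum_fAux]
    push_cast
    rfl
  have hR : ∀ k ∈ Finset.range n, (qA A k : ℤ) * tauSA A (n - k)
      = ∑ a ∈ Finset.range (n + 1),
          (if a ∈ A ∧ a ∣ (n - k) then (-1 : ℤ) ^ ((n - k) / a - 1) * (qA A k : ℤ) else 0) := by
    intro k hk
    rw [Finset.mem_range] at hk
    have hset : Finset.filter (fun a => a ∈ A ∧ a ∣ (n - k)) (Finset.range (n + 1))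
        = (n - k).divisors.filter (· ∈ A) := by
      ext x
      simp only [Finset.mem_filter, Finset.mem_range, Nat.mem_divisors]
      constructor
      · rintro ⟨-, hxA, hdvd⟩
        exact ⟨⟨hdvd, by omega⟩, hxA⟩
      · rintro ⟨⟨hdvd, -⟩, hxA⟩
        have := Nat.le_of_dvd (by omega) hdvd
        exact ⟨by omega, hxA, hdvd⟩
    rw [← Finset.sum_filter, hset]
    simp only [tauSA, Finset.mul_sum]
    exact Finset.sum_congr rfl fun a _ => by ring
  have hMain : ∀ a ∈ Finset.range (n + 1), (fAux A a n : ℤ)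
      = ∑ k ∈ Finset.range n,
          (if a ∈ A ∧ a ∣ (n - k) then (-1 : ℤ) ^ ((n - k) / a - 1) * (qA A k : ℤ) else 0) := by
    intro a _
    by_cases haA : a ∈ A
    · have hapos : 0 < a := hA a haA
      rw [fAux_formula A haA hapos n, ← Finset.sum_filter]
      refine Finset.sum_nbij' (fun j => n - (j + 1) * a) (fun k => (n - k) / a - 1)
        ?_ ?_ ?_ ?_ ?_
      · intro j hj
        rw [Finset.mem_range] at hj
        have hle : (j + 1) * a ≤ n := (Nat.le_div_iff_mul_le hapos).mp hj
        have hpos : 0 < (j + 1) * a := by positivity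
        simp only [Finset.mem_filter, Finset.mem_range]
        refine ⟨by omega, haA, ?_⟩
        have h1 : n - (n - (j + 1) * a) = (j + 1) * a := by omega
        rw [h1]
        exact dvd_mul_left a (j + 1)
      · intro k hk
        simp only [Finset.mem_filter, Finset.mem_range] at hk
        obtain ⟨hkn, -, hdvd⟩ := hk
        have h1 : a ≤ n - k := Nat.le_of_dvd (by omega) hdvd
        have h2 : 0 < (n - k) / a := Nat.div_pos h1 hapos
        have h3 : (n - k) / a * a = n - k := Nat.div_mul_cancel hdvd
        have h4 : (n - k) / a ≤ n / a := by
          rw [Nat.le_div_iff_mul_le hapos, h3]; omega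
        rw [Finset.mem_range]
        exact lt_of_lt_of_le (Nat.sub_lt h2 one_pos) h4
      · intro j hj
        rw [Finset.mem_range] at hj
        have hle : (j + 1) * a ≤ n := (Nat.le_div_iff_mul_le hapos).mp hj
        have h1 : n - (n - (j + 1) * a) = (j + 1) * a := by omega
        simp only [h1, Nat.mul_div_cancel _ hapos, Nat.add_sub_cancel]
      · intro k hk
        simp only [Finset.mem_filter, Finset.mem_range] at hk
        obtain ⟨hkn, -, hdvd⟩ := hk
        have h1 : a ≤ n - k := Nat.le_of_dvd (by omega) hdvd
        have h2 : 1 ≤ (n - k) / a := Nat.div_pos h1 hapos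
        have h3 : (n - k) / a * a = n - k := Nat.div_mul_cancel hdvd
        simp only [Nat.sub_add_cancel h2, h3]
        omega
      · intro j hj
        rw [Finset.mem_range] at hj
        have hle : (j + 1) * a ≤ n := (Nat.le_div_iff_mul_le hapos).mp hj
        have h1 : n - (n - (j + 1) * a) = (j + 1) * a := by omega
        simp only [h1, Nat.mul_div_cancel _ hapos, Nat.add_sub_cancel]
    · rw [fAux_notMem A haA]
      symm
      push_cast
      exact Finset.sum_eq_zero fun k _ => if_neg (by tauto)
  calc (NqA A n : ℤ)
      = ∑ a ∈ Finset.range (n + 1), (fAux A a n : ℤ) := hL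
    _ = ∑ a ∈ Finset.range (n + 1), ∑ k ∈ Finset.range n,
          (if a ∈ A ∧ a ∣ (n - k) then (-1 : ℤ) ^ ((n - k) / a - 1) * (qA A k : ℤ) else 0) :=
        Finset.sum_congr rfl hMain
    _ = ∑ k ∈ Finset.range n, ∑ a ∈ Finset.range (n + 1),
          (if a ∈ A ∧ a ∣ (n - k) then (-1 : ℤ) ^ ((n - k) / a - 1) * (qA A k : ℤ) else 0) :=
        Finset.sum_comm
    _ = ∑ k ∈ Finset.range n, (qA A k : ℤ) * tauSA A (n - k) :=
        Finset.sum_congr rfl fun k hk => (hR k hk).symm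
end

section
/- For every positive integer n, the total number of parts N^p(n) over all partitions of n satisfies N^p(n) = Σ_{k=0}^{n-1} p(k) · τ(n−k), where p(k) is the number of partitions of k and τ(m) is the number of divisors of m. -/
open scoped Classical
open Finset

private lemma msum_le {s t : Multiset ℕ} (h : s ≤ t) : s.sum ≤ t.sum := by
  obtain ⟨u, rfl⟩ := Multiset.le_iff_exists_add.mp h
  simp

private lemma count_mul_le (n a : ℕ) (p : n.Partition) : p.parts.count a * a ≤ n := by
  have h : Multiset.replicate (p.parts.count a) a ≤ p.parts :=
    Multiset.le_count_iff_replicate_le.mp le_rfl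
  have h2 := msum_le h
  simpa [Multiset.sum_replicate, p.parts_sum, smul_eq_mul] using h2

private lemma card_ge_count (n a j : ℕ) (ha : 0 < a) (hj : 0 < j) :
    (Finset.univ.filter fun p : n.Partition => j ≤ p.parts.count a).card =
      if a * j ≤ n then Fintype.card ((n - a * j).Partition) else 0 := by
  split_ifs with h
  · rw [← Fintype.card_subtype]
    refine Fintype.card_congr ?_
    refine
      { toFun := fun p => ⟨p.1.parts - Multiset.replicate j a, ?_, ?_⟩
        invFun := fun q => ⟨⟨q.parts + Multiset.replicate j a, ?_, ?_⟩, ?_⟩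
        left_inv := ?_
        right_inv := ?_ }
    · intro i hi
      exact p.1.parts_pos (Multiset.mem_of_le (tsub_le_self) hi)
    · have hle : Multiset.replicate j a ≤ p.1.parts :=
        Multiset.le_count_iff_replicate_le.mp p.2
      have h1 : (p.1.parts - Multiset.replicate j a).sum + (Multiset.replicate j a).sum
          = p.1.parts.sum := by
        rw [← Multiset.sum_add, tsub_add_cancel_of_le hle]
      have h2 : (Multiset.replicate j a).sum = j * a := by
        simp [Multiset.sum_replicate, smul_eq_mul]
      have h3 := p.1.parts_sum
      rw [h2, h3] at h1
      have hc : a * j = j * a := Nat.mul_comm _ _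
      omega
    · intro i hi
      rcases Multiset.mem_add.mp hi with h1 | h1
      · exact q.parts_pos h1
      · rw [Multiset.eq_of_mem_replicate h1]; exact ha
    · have h2 : (Multiset.replicate j a).sum = j * a := by
        simp [Multiset.sum_replicate, smul_eq_mul]
      rw [Multiset.sum_add, h2, q.parts_sum]
      have hc : a * j = j * a := Nat.mul_comm _ _
      omega
    · simp [Multiset.count_replicate]
    · rintro ⟨p, hp⟩
      have hle : Multiset.replicate j a ≤ p.parts :=
        Multiset.le_count_iff_replicate_le.mp hp
      ext1
      ext1
      simp [tsub_add_cancel_of_le hle]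
    · rintro q
      ext1
      simp
  · rw [Finset.card_eq_zero, Finset.filter_eq_empty_iff]
    intro p _
    intro hc
    have h1 := count_mul_le n a p
    have h2 : j * a ≤ p.parts.count a * a := Nat.mul_le_mul_right _ hc
    have : a * j = j * a := Nat.mul_comm _ _
    omega

private lemma pA_univ (k : ℕ) : pA Set.univ k = Fintype.card k.Partition := by
  rw [pA]
  simp only [Set.mem_univ, implies_true, if_true]
  rw [Finset.sum_const, smul_eq_mul, Nat.mul_one, Fintype.card]

theorem stmt2 (n : ℕ) (hn : 0 < n) :
    NpA Set.univ n = ∑ k ∈ Finset.range n, pA Set.univ k * (n - k).divisors.card := by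
  classical
  -- step 1: LHS as double sum
  have hcard : ∀ p : n.Partition,
      (Multiset.card p.parts) = ∑ a ∈ Finset.Icc 1 n, p.parts.count a := by
    intro p
    rw [← Multiset.toFinset_sum_count_eq]
    refine Finset.sum_subset ?_ ?_
    · intro x hx
      have hx' := Multiset.mem_toFinset.mp hx
      have h1 := p.parts_pos hx'
      have h2 : x ≤ p.parts.sum :=
        Multiset.single_le_sum (fun y _ => Nat.zero_le y) _ hx'
      rw [p.parts_sum] at h2
      exact Finset.mem_Icc.mpr ⟨h1, h2⟩
    · intro x _ hx
      exact Multiset.count_eq_zero_of_notMem (fun hm => hx (Multiset.mem_toFinset.mpr hm))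
  have hcount : ∀ (p : n.Partition) (a : ℕ), a ∈ Finset.Icc 1 n →
      p.parts.count a = ∑ j ∈ Finset.Icc 1 n, (if j ≤ p.parts.count a then 1 else 0) := by
    intro p a ha
    rw [Finset.mem_Icc] at ha
    have hc : p.parts.count a ≤ n := by
      have h1 := count_mul_le n a p
      have h2 : p.parts.count a ≤ p.parts.count a * a :=
        Nat.le_mul_of_pos_right _ ha.1
      omega
    rw [← Finset.card_filter]
    have : (Finset.Icc 1 n).filter (fun j => j ≤ p.parts.count a)
        = Finset.Icc 1 (p.parts.count a) := by
      ext j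
      simp only [Finset.mem_filter, Finset.mem_Icc]
      omega
    rw [this, Nat.card_Icc]
    omega
  have lhs : NpA Set.univ n = ∑ a ∈ Finset.Icc 1 n, ∑ j ∈ Finset.Icc 1 n,
      (if a * j ≤ n then Fintype.card ((n - a * j).Partition) else 0) := by
    rw [NpA]
    simp only [Set.mem_univ, implies_true, if_true]
    calc ∑ p : n.Partition, (Multiset.card p.parts)
        = ∑ p : n.Partition, ∑ a ∈ Finset.Icc 1 n, ∑ j ∈ Finset.Icc 1 n,
            (if j ≤ p.parts.count a then 1 else 0) := by
          refine Finset.sum_congr rfl fun p _ => ?_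
          rw [hcard p]
          exact Finset.sum_congr rfl fun a ha => hcount p a ha
      _ = ∑ a ∈ Finset.Icc 1 n, ∑ j ∈ Finset.Icc 1 n, ∑ p : n.Partition,
            (if j ≤ p.parts.count a then 1 else 0) := by
          rw [Finset.sum_comm]
          exact Finset.sum_congr rfl fun a _ => Finset.sum_comm
      _ = ∑ a ∈ Finset.Icc 1 n, ∑ j ∈ Finset.Icc 1 n,
            (if a * j ≤ n then Fintype.card ((n - a * j).Partition) else 0) := by
          refine Finset.sum_congr rfl fun a ha => Finset.sum_congr rfl fun j hj => ?_
          rw [Finset.mem_Icc] at ha hj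
          rw [← Finset.card_filter]
          exact card_ge_count n a j ha.1 hj.1
  rw [lhs]
  -- step 2: RHS as sigma sum
  have rhs : ∑ x ∈ (Finset.range n).sigma (fun k => (n - k).divisors),
          Fintype.card ((x.1 : ℕ).Partition)
      = ∑ k ∈ Finset.range n, pA Set.univ k * (n - k).divisors.card := by
    rw [Finset.sum_sigma]
    refine Finset.sum_congr rfl fun k _ => ?_
    have hc : ∀ s ∈ (n - k).divisors,
        Fintype.card ((Sigma.mk (β := fun _ : ℕ => ℕ) k s).fst.Partition) = Fintype.card k.Partition :=
      fun _ _ => rfl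
    rw [Finset.sum_congr rfl hc, Finset.sum_const, smul_eq_mul, pA_univ, Nat.mul_comm]
  rw [← rhs]
  -- step 3: turn LHS into sum over filtered product, then bijection
  rw [← Finset.sum_product']
  rw [← Finset.sum_filter]
  refine Finset.sum_nbij' (fun x => ⟨n - x.1 * x.2, x.1⟩)
    (fun y => (y.2, (n - y.1) / y.2)) ?_ ?_ ?_ ?_ ?_
  · rintro ⟨a, j⟩ hx
    simp only [Finset.mem_filter, Finset.mem_product, Finset.mem_Icc] at hx
    obtain ⟨⟨⟨ha1, ha2⟩, hj1, hj2⟩, hle⟩ := hx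
    simp only [Finset.mem_sigma, Finset.mem_range]
    constructor
    · have : 1 ≤ a * j := Nat.one_le_iff_ne_zero.mpr (by positivity)
      omega
    · have heq : n - (n - a * j) = a * j := by omega
      rw [heq, Nat.mem_divisors]
      exact ⟨Dvd.intro j rfl, by positivity⟩
  · rintro ⟨k, a⟩ hy
    simp only [Finset.mem_sigma, Finset.mem_range, Nat.mem_divisors] at hy
    obtain ⟨hk, hdvd, hne⟩ := hy
    have ha : 0 < a := Nat.pos_of_dvd_of_pos hdvd (Nat.pos_of_ne_zero hne)
    have hale : a ≤ n - k := Nat.le_of_dvd (Nat.pos_of_ne_zero hne) hdvd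
    have hdiv : 0 < (n - k) / a := Nat.div_pos hale ha
    simp only [Finset.mem_filter, Finset.mem_product, Finset.mem_Icc]
    refine ⟨⟨⟨ha, by omega⟩, hdiv, le_trans (Nat.div_le_self _ _) (by omega)⟩, ?_⟩
    rw [Nat.mul_div_cancel' hdvd]
    omega
  · rintro ⟨a, j⟩ hx
    simp only [Finset.mem_filter, Finset.mem_product, Finset.mem_Icc] at hx
    obtain ⟨⟨⟨ha1, _⟩, _, _⟩, hle⟩ := hx
    have heq : n - (n - a * j) = a * j := by omega
    simp only [heq, Nat.mul_div_cancel_left _ ha1]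
  · rintro ⟨k, a⟩ hy
    simp only [Finset.mem_sigma, Finset.mem_range, Nat.mem_divisors] at hy
    obtain ⟨hk, hdvd, hne⟩ := hy
    show (⟨n - a * ((n - k) / a), a⟩ : (_ : ℕ) × ℕ) = ⟨k, a⟩
    rw [Nat.mul_div_cancel' hdvd]
    have hkk : n - (n - k) = k := by omega
    rw [hkk]
  · rintro ⟨a, j⟩ hx
    rfl
end

section
/- For every positive integer n, the total number of parts N^q(n) over all partitions of n into distinct parts satisfies N^q(n) = Σ_{k=0}^{n-1} q(k) · τ^s(n−k), where q(k) is the number of partitions of k into distinct parts and τ^s(m) = Σ_{d∣m} (−1)^{m/d − 1}. -/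
open scoped Classical
open Finset

section Aux

/-- number of distinct partitions of `m` containing `j` as a part -/
noncomputable def cnt (j m : ℕ) : ℕ :=
  ((Nat.Partition.distincts m).filter (fun p => j ∈ p.parts)).card

lemma qA_univ (m : ℕ) : qA Set.univ m = (Nat.Partition.distincts m).card := by
  rw [qA, Nat.Partition.distincts, Finset.card_filter]
  simp

lemma NqA_univ (n : ℕ) :
    NqA Set.univ n = ∑ p ∈ Nat.Partition.distincts n, Multiset.card p.parts := by
  rw [NqA, Nat.Partition.distincts, Finset.sum_filter]
  simp

lemma cnt_eq_zero {j m : ℕ} (h : m < j) : cnt j m = 0 := by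
  rw [cnt, Finset.card_eq_zero, Finset.filter_eq_empty_iff]
  intro p _ hj
  exact absurd ((Multiset.le_sum_of_mem hj).trans_eq p.parts_sum) (not_le.mpr h)

lemma cnt_add (j m : ℕ) (hj : 0 < j) :
    ((Nat.Partition.distincts m).filter (fun p => j ∉ p.parts)).card = cnt j (m + j) := by
  rw [cnt]
  apply Finset.card_bij (fun p _ => Nat.Partition.mk (j ::ₘ p.parts)
      (fun {i} hi => by
        rcases Multiset.mem_cons.mp hi with h | h
        exacts [h ▸ hj, p.parts_pos h])
      (by rw [Multiset.sum_cons, p.parts_sum, Nat.add_comm]))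
  · rintro p hp
    simp only [Nat.Partition.distincts, Finset.mem_filter, Finset.mem_univ, true_and] at hp ⊢
    exact ⟨Multiset.nodup_cons.mpr ⟨hp.2, hp.1⟩, Multiset.mem_cons_self _ _⟩
  · rintro p hp q hq hpq
    apply Nat.Partition.ext
    have h2 : j ::ₘ p.parts = j ::ₘ q.parts := congrArg Nat.Partition.parts hpq
    exact (Multiset.cons_inj_right j).mp h2
  · rintro p hp
    simp only [Nat.Partition.distincts, Finset.mem_filter, Finset.mem_univ, true_and] at hp
    obtain ⟨hnd, hjmem⟩ := hp
    have hsum : j + (p.parts.erase j).sum = m + j := by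
      rw [← Multiset.sum_cons, Multiset.cons_erase hjmem, p.parts_sum]
    refine ⟨Nat.Partition.mk (p.parts.erase j)
      (fun {i} hi => p.parts_pos (Multiset.mem_of_mem_erase hi)) (by omega), ?_, ?_⟩
    · simp only [Nat.Partition.distincts, Finset.mem_filter, Finset.mem_univ, true_and]
      exact ⟨hnd.erase j, by simp [Multiset.Nodup.mem_erase_iff hnd]⟩
    · apply Nat.Partition.ext
      simp [Multiset.cons_erase hjmem]

lemma cnt_rec (j m : ℕ) (hj : 0 < j) :
    qA Set.univ m = cnt j m + cnt j (m + j) := by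
  rw [qA_univ, ← Finset.card_filter_add_card_filter_not
    (s := Nat.Partition.distincts m) (p := fun p => j ∈ p.parts), cnt_add j m hj, cnt]
  rfl

lemma cnt_closed (j n : ℕ) (hj : 0 < j) (K : ℕ) (hK : j * K ≤ n) :
    (cnt j n : ℤ) = (∑ k ∈ Finset.Icc 1 K, (-1 : ℤ) ^ (k - 1) * (qA Set.univ (n - j * k) : ℤ))
      + (-1 : ℤ) ^ K * (cnt j (n - j * K) : ℤ) := by
  induction K with
  | zero => simp
  | succ K ih =>
      have hjK : j * (K + 1) = j * K + j := by ring
      have hK' : j * K ≤ n := by omega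
      rw [ih hK', Finset.sum_Icc_succ_top (by omega : 1 ≤ K + 1)]
      have hstep := cnt_rec j (n - j * (K + 1)) hj
      have he : n - j * (K + 1) + j = n - j * K := by omega
      rw [he] at hstep
      have hcast : (cnt j (n - j * K) : ℤ)
          = (qA Set.univ (n - j * (K + 1)) : ℤ) - (cnt j (n - j * (K + 1)) : ℤ) := by
        rw [hstep]; push_cast; ring
      rw [hcast]
      have h1 : K + 1 - 1 = K := rfl
      rw [h1, pow_succ]
      ring

end Aux

lemma NqA_eq_sum_cnt (n : ℕ) : NqA Set.univ n = ∑ j ∈ Finset.Icc 1 n, cnt j n := by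
  rw [NqA_univ]
  have key : ∀ p ∈ Nat.Partition.distincts n, Multiset.card p.parts
      = ∑ j ∈ Finset.Icc 1 n, if j ∈ p.parts then 1 else 0 := by
    intro p hp
    have hnd : p.parts.Nodup := by
      simpa [Nat.Partition.distincts] using hp
    rw [← Finset.card_filter]
    have hfil : (Finset.Icc 1 n).filter (fun j => j ∈ p.parts) = p.parts.toFinset := by
      ext a
      simp only [Finset.mem_filter, Finset.mem_Icc, Multiset.mem_toFinset]
      refine ⟨fun h => h.2, fun h => ⟨⟨p.parts_pos h, (Multiset.le_sum_of_mem h).trans_eq p.parts_sum⟩, h⟩⟩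
    rw [hfil, Multiset.toFinset_card_of_nodup hnd]
  rw [Finset.sum_congr rfl key, Finset.sum_comm]
  refine Finset.sum_congr rfl fun j _ => ?_
  rw [cnt, Finset.card_filter]

lemma cnt_formula (j n : ℕ) (hj : 0 < j) :
    (cnt j n : ℤ) = ∑ k ∈ Finset.Icc 1 (n / j), (-1 : ℤ) ^ (k - 1) * (qA Set.univ (n - j * k) : ℤ) := by
  have hle : j * (n / j) ≤ n := by
    rw [mul_comm]; exact Nat.div_mul_le_self n j
  have h := cnt_closed j n hj (n / j) hle
  have h1 := Nat.div_add_mod n j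
  have h2 := Nat.mod_lt n hj
  have hz : cnt j (n - j * (n / j)) = 0 := cnt_eq_zero (by omega)
  rw [h, hz]
  simp

lemma reindex (n : ℕ) (f : ℕ → ℕ → ℤ) :
    ∑ j ∈ Finset.Icc 1 n, ∑ k ∈ Finset.Icc 1 (n / j), f j k
      = ∑ m ∈ Finset.Icc 1 n, ∑ a ∈ m.divisors, f a (m / a) := by
  rw [Finset.sum_sigma', Finset.sum_sigma']
  refine Finset.sum_nbij' (i := fun x => (⟨x.1 * x.2, x.1⟩ : Σ _ : ℕ, ℕ))
    (j := fun x => (⟨x.2, x.1 / x.2⟩ : Σ _ : ℕ, ℕ)) ?_ ?_ ?_ ?_ ?_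
  · rintro ⟨j, k⟩ h
    simp only [Finset.mem_sigma, Finset.mem_Icc] at h ⊢
    rw [Nat.mem_divisors]
    have hj : 1 ≤ j := h.1.1
    have hk : 1 ≤ k := h.2.1
    have hkn : k ≤ n / j := h.2.2
    have : j * k ≤ n := by
      rw [mul_comm]; exact (Nat.le_div_iff_mul_le (by omega)).mp hkn
    constructor
    · constructor <;> nlinarith
    · exact ⟨Dvd.intro k rfl, by nlinarith⟩
  · rintro ⟨m, a⟩ h
    simp only [Finset.mem_sigma, Finset.mem_Icc, Nat.mem_divisors] at h ⊢
    obtain ⟨⟨hm1, hmn⟩, hdvd, hm0⟩ := h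
    have ha0 : 0 < a := Nat.pos_of_dvd_of_pos hdvd (by omega)
    refine ⟨⟨ha0, le_trans (Nat.le_of_dvd (by omega) hdvd) hmn⟩, ?_, ?_⟩
    · exact Nat.one_le_div_iff ha0 |>.mpr (Nat.le_of_dvd (by omega) hdvd)
    · exact Nat.div_le_div_right hmn
  · rintro ⟨j, k⟩ h
    simp only [Finset.mem_sigma, Finset.mem_Icc] at h
    have hj : j ≠ 0 := by omega
    simp [Nat.mul_div_cancel_left k (Nat.pos_of_ne_zero hj)]
  · rintro ⟨m, a⟩ h
    simp only [Finset.mem_sigma, Finset.mem_Icc, Nat.mem_divisors] at h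
    obtain ⟨_, hdvd, _⟩ := h
    simp [Nat.mul_div_cancel' hdvd]
  · rintro ⟨j, k⟩ h
    simp only [Finset.mem_sigma, Finset.mem_Icc] at h
    have hj : j ≠ 0 := by omega
    simp [Nat.mul_div_cancel_left k (Nat.pos_of_ne_zero hj)]

lemma tauSA_univ (m : ℕ) : tauSA Set.univ m = ∑ a ∈ m.divisors, (-1 : ℤ) ^ (m / a - 1) := by
  rw [tauSA]
  congr 1
  simp [Finset.filter_true_of_mem]


theorem stmt3 (n : ℕ) (hn : 0 < n) :
    (NqA Set.univ n : ℤ) = ∑ k ∈ Finset.range n, (qA Set.univ k : ℤ) * tauSA Set.univ (n - k) := by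
  have lhs : (NqA Set.univ n : ℤ)
      = ∑ m ∈ Finset.Icc 1 n, ∑ a ∈ m.divisors, (-1 : ℤ) ^ (m / a - 1) * (qA Set.univ (n - m) : ℤ) := by
    rw [NqA_eq_sum_cnt]
    push_cast
    rw [Finset.sum_congr rfl (fun j hj => cnt_formula j n (by
      simp only [Finset.mem_Icc] at hj; omega))]
    rw [reindex n (fun j k => (-1 : ℤ) ^ (k - 1) * (qA Set.univ (n - j * k) : ℤ))]
    refine Finset.sum_congr rfl fun m hm => Finset.sum_congr rfl fun a ha => ?_
    simp only [Nat.mem_divisors] at ha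
    rw [Nat.mul_div_cancel' ha.1]
  rw [lhs]
  refine Finset.sum_nbij' (i := fun m => n - m) (j := fun k => n - k) ?_ ?_ ?_ ?_ ?_
  · intro m hm
    simp only [Finset.mem_Icc] at hm
    simp only [Finset.mem_range]
    omega
  · intro k hk
    simp only [Finset.mem_range] at hk
    simp only [Finset.mem_Icc]
    omega
  · intro m hm
    simp only [Finset.mem_Icc] at hm
    omega
  · intro k hk
    simp only [Finset.mem_range] at hk
    omega
  · intro m hm
    simp only [Finset.mem_Icc] at hm
    have h1 : n - (n - m) = m := by omega
    rw [h1, tauSA_univ, Finset.mul_sum]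
    exact Finset.sum_congr rfl fun a _ => by ring
end

section
/- Let A be the set of prime numbers. For every positive integer n, N^p_A(n) = Σ_{k=0}^{n-1} p_A(k) · Ω(n−k), where N^p_A(n) is the total number of parts over all partitions of n into prime parts, p_A(k) is the number of partitions of k into prime parts (with p_A(0)=1), and Ω(m) is the number of prime divisors of m (counted without multiplicity of exponents, i.e., the number of primes dividing m). -/
open scoped Classical
open Finset

/-- Remove `c` copies of `a` from a partition of `n`. -/
def removeParts {n : ℕ} (a c : ℕ) (p : n.Partition)
    (h : Multiset.replicate c a ≤ p.parts) : (n - c * a).Partition where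
  parts := p.parts - Multiset.replicate c a
  parts_pos := fun hi => p.parts_pos (Multiset.mem_of_le tsub_le_self hi)
  parts_sum := by
    have h2 : (p.parts - Multiset.replicate c a) + Multiset.replicate c a = p.parts :=
      tsub_add_cancel_of_le h
    have h3 := congrArg Multiset.sum h2
    rw [Multiset.sum_add, Multiset.sum_replicate, smul_eq_mul, p.parts_sum] at h3
    omega

/-- Add `c` copies of `a` to a partition of `n - c*a`. -/
def addParts {n : ℕ} (a c : ℕ) (ha : 0 < a) (hc : c * a ≤ n)
    (q : (n - c * a).Partition) : n.Partition where
  parts := q.parts + Multiset.replicate c a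
  parts_pos := fun hi => by
    rcases Multiset.mem_add.mp hi with h | h
    · exact q.parts_pos h
    · rw [Multiset.eq_of_mem_replicate h]; exact ha
  parts_sum := by
    rw [Multiset.sum_add, Multiset.sum_replicate, smul_eq_mul, q.parts_sum]; omega

lemma M_eq (A : Set ℕ) (n a c : ℕ) (ha : 0 < a) (haA : a ∈ A) (hc : c * a ≤ n) :
    (∑ p : n.Partition, if (∀ x ∈ p.parts, x ∈ A) ∧ c ≤ p.parts.count a then 1 else 0)
      = pA A (n - c * a) := by
  classical
  rw [pA, ← Finset.card_filter, ← Finset.card_filter]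
  have key : ∀ p : n.Partition,
      p ∈ Finset.univ.filter (fun p : n.Partition =>
        (∀ x ∈ p.parts, x ∈ A) ∧ c ≤ p.parts.count a) →
      Multiset.replicate c a ≤ p.parts := by
    intro p hp
    rw [Finset.mem_filter] at hp
    exact Multiset.le_count_iff_replicate_le.mp hp.2.2
  refine Finset.card_bij' (fun p hp => removeParts a c p (key p hp))
    (fun q _ => addParts a c ha hc q) ?_ ?_ ?_ ?_
  · intro p hp
    rw [Finset.mem_filter] at hp ⊢
    refine ⟨Finset.mem_univ _, fun x hx => ?_⟩
    exact hp.2.1 x (Multiset.mem_of_le tsub_le_self hx)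
  · intro q hq
    rw [Finset.mem_filter] at hq ⊢
    refine ⟨Finset.mem_univ _, fun x hx => ?_, ?_⟩
    · rcases Multiset.mem_add.mp hx with h | h
      · exact hq.2 x h
      · rw [Multiset.eq_of_mem_replicate h]; exact haA
    · show c ≤ Multiset.count a (q.parts + Multiset.replicate c a)
      simp [Multiset.count_replicate_self]
  · intro p hp
    ext1
    show (p.parts - Multiset.replicate c a) + Multiset.replicate c a = p.parts
    exact tsub_add_cancel_of_le (key p hp)
  · intro q hq
    ext1
    show (q.parts + Multiset.replicate c a) - Multiset.replicate c a = q.parts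
    exact add_tsub_cancel_right _ _

lemma sum_ite_le (c n : ℕ) (hc : c ≤ n) :
    ∑ j ∈ Finset.range n, (if j + 1 ≤ c then 1 else 0) = c := by
  rw [← Finset.card_filter]
  have : (Finset.range n).filter (fun j => j + 1 ≤ c) = Finset.range c := by
    ext j; simp; omega
  rw [this, Finset.card_range]

lemma replicate_le_sum {n : ℕ} {a c : ℕ} {p : n.Partition}
    (h : Multiset.replicate c a ≤ p.parts) : c * a ≤ n := by
  obtain ⟨u, hu⟩ := Multiset.le_iff_exists_add.mp h
  have := congrArg Multiset.sum hu
  rw [Multiset.sum_add, Multiset.sum_replicate, smul_eq_mul, p.parts_sum] at this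
  omega

lemma count_le {n : ℕ} (a : ℕ) (ha : 0 < a) (p : n.Partition) : p.parts.count a ≤ n := by
  have h2 : p.parts.count a * a ≤ n :=
    replicate_le_sum (Multiset.le_count_iff_replicate_le.mp le_rfl)
  calc p.parts.count a ≤ p.parts.count a * a := Nat.le_mul_of_pos_right _ ha
    _ ≤ n := h2

lemma count_sum (A : Set ℕ) (n a : ℕ) (ha : 0 < a) (haA : a ∈ A) :
    (∑ p : n.Partition, if ∀ x ∈ p.parts, x ∈ A then p.parts.count a else 0)
      = ∑ k ∈ Finset.range n, if a ∣ (n - k) then pA A k else 0 := by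
  classical
  have step1 : ∀ p : n.Partition,
      (if ∀ x ∈ p.parts, x ∈ A then p.parts.count a else 0)
        = ∑ j ∈ Finset.range n, if (∀ x ∈ p.parts, x ∈ A) ∧ j + 1 ≤ p.parts.count a
            then 1 else 0 := by
    intro p
    by_cases h : ∀ x ∈ p.parts, x ∈ A
    · rw [if_pos h]
      symm
      calc ∑ j ∈ Finset.range n,
            (if (∀ x ∈ p.parts, x ∈ A) ∧ j + 1 ≤ p.parts.count a then 1 else 0)
          = ∑ j ∈ Finset.range n, (if j + 1 ≤ p.parts.count a then 1 else 0) :=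
            Finset.sum_congr rfl fun j _ => if_congr (and_iff_right h) rfl rfl
        _ = p.parts.count a := sum_ite_le _ _ (count_le a ha p)
    · rw [if_neg h]
      symm
      apply Finset.sum_eq_zero
      intro j _
      rw [if_neg]
      rintro ⟨h1, -⟩
      exact h h1
  rw [Finset.sum_congr rfl (fun p _ => step1 p), Finset.sum_comm]
  have step2 : ∀ j ∈ Finset.range n,
      (∑ p : n.Partition, if (∀ x ∈ p.parts, x ∈ A) ∧ j + 1 ≤ p.parts.count a then 1 else 0)
        = if (j + 1) * a ≤ n then pA A (n - (j + 1) * a) else 0 := by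
    intro j _
    by_cases hja : (j + 1) * a ≤ n
    · rw [if_pos hja]; exact M_eq A n a (j + 1) ha haA hja
    · rw [if_neg hja]
      apply Finset.sum_eq_zero
      intro p _
      rw [if_neg]
      rintro ⟨-, hcount⟩
      exact hja (replicate_le_sum (Multiset.le_count_iff_replicate_le.mp hcount))
  rw [Finset.sum_congr rfl step2]
  rw [← Finset.sum_filter, ← Finset.sum_filter]
  refine Finset.sum_nbij' (i := fun j => n - (j + 1) * a) (j := fun k => (n - k) / a - 1)
    ?_ ?_ ?_ ?_ ?_
  · intro j hj
    simp only [Finset.mem_filter, Finset.mem_range] at hj ⊢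
    have h5 : a ≤ (j + 1) * a := Nat.le_mul_of_pos_left a (by omega)
    have h1 : n - (n - (j + 1) * a) = (j + 1) * a := by omega
    exact ⟨by omega, by rw [h1]; exact dvd_mul_left a (j + 1)⟩
  · intro k hk
    simp only [Finset.mem_filter, Finset.mem_range] at hk ⊢
    obtain ⟨m, hm⟩ := hk.2
    have hm1 : 1 ≤ m := by
      rcases Nat.eq_zero_or_pos m with h | h
      · subst h; simp at hm; omega
      · exact h
    have h2 : (n - k) / a = m := by rw [hm, Nat.mul_div_cancel_left _ ha]
    have hmle : m ≤ a * m := Nat.le_mul_of_pos_left m ha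
    have h6 : (m - 1 + 1) * a = a * m := by rw [Nat.sub_add_cancel hm1, mul_comm]
    rw [h2]
    omega
  · intro j hj
    simp only [Finset.mem_filter, Finset.mem_range] at hj
    show (n - (n - (j + 1) * a)) / a - 1 = j
    have h1 : n - (n - (j + 1) * a) = (j + 1) * a := by omega
    rw [h1, Nat.mul_div_cancel _ ha]
    omega
  · intro k hk
    simp only [Finset.mem_filter, Finset.mem_range] at hk
    obtain ⟨m, hm⟩ := hk.2
    have hm1 : 1 ≤ m := by
      rcases Nat.eq_zero_or_pos m with h | h
      · subst h; simp at hm; omega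
      · exact h
    have h2 : (n - k) / a = m := by rw [hm, Nat.mul_div_cancel_left _ ha]
    show n - ((n - k) / a - 1 + 1) * a = k
    have h6 : (m - 1 + 1) * a = a * m := by rw [Nat.sub_add_cancel hm1, mul_comm]
    rw [h2]
    omega
  · intro j hj
    rfl

lemma card_eq_sum_counts {n : ℕ} (p : n.Partition) :
    p.parts.card = ∑ a ∈ Finset.range (n + 1), p.parts.count a := by
  rw [← Multiset.toFinset_sum_count_eq]
  apply Finset.sum_subset
  · intro x hx
    rw [Multiset.mem_toFinset] at hx
    have hle : x ≤ p.parts.sum :=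
      Multiset.single_le_sum (fun y _ => Nat.zero_le y) x hx
    rw [p.parts_sum] at hle
    rw [Finset.mem_range]; omega
  · intro x _ hx
    rw [Multiset.mem_toFinset] at hx
    exact Multiset.count_eq_zero.mpr hx

lemma main (A : Set ℕ) (hA : ∀ a ∈ A, 0 < a) (n : ℕ) :
    NpA A n = ∑ k ∈ Finset.range n,
      pA A k * ((Finset.range (n + 1)).filter (fun a => a ∈ A ∧ a ∣ n - k)).card := by
  classical
  calc NpA A n
      = ∑ p : n.Partition, ∑ a ∈ Finset.range (n + 1),
          (if ∀ x ∈ p.parts, x ∈ A then p.parts.count a else 0) := by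
        rw [NpA]
        refine Finset.sum_congr rfl fun p _ => ?_
        by_cases h : ∀ x ∈ p.parts, x ∈ A
        · rw [if_pos h, card_eq_sum_counts p]
          exact Finset.sum_congr rfl fun a _ => (if_pos h).symm
        · rw [if_neg h]
          symm
          exact Finset.sum_eq_zero fun a _ => if_neg h
    _ = ∑ a ∈ Finset.range (n + 1), ∑ p : n.Partition,
          (if ∀ x ∈ p.parts, x ∈ A then p.parts.count a else 0) := Finset.sum_comm
    _ = ∑ a ∈ Finset.range (n + 1),
          (if a ∈ A then ∑ k ∈ Finset.range n, (if a ∣ n - k then pA A k else 0)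
            else 0) := by
        refine Finset.sum_congr rfl fun a _ => ?_
        by_cases hp : a ∈ A
        · rw [if_pos hp]
          exact count_sum A n a (hA a hp) hp
        · rw [if_neg hp]
          apply Finset.sum_eq_zero
          intro p _
          by_cases h : ∀ x ∈ p.parts, x ∈ A
          · rw [if_pos h]
            rw [Multiset.count_eq_zero]
            intro hmem
            exact hp (h a hmem)
          · rw [if_neg h]
    _ = ∑ a ∈ Finset.range (n + 1), ∑ k ∈ Finset.range n,
          (if a ∈ A ∧ a ∣ n - k then pA A k else 0) := by
        refine Finset.sum_congr rfl fun a _ => ?_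
        by_cases hp : a ∈ A
        · rw [if_pos hp]
          exact Finset.sum_congr rfl fun k _ => (if_congr (and_iff_right hp) rfl rfl).symm
        · rw [if_neg hp]
          symm
          apply Finset.sum_eq_zero
          intro k _
          rw [if_neg]
          rintro ⟨h, -⟩
          exact hp h
    _ = ∑ k ∈ Finset.range n, ∑ a ∈ Finset.range (n + 1),
          (if a ∈ A ∧ a ∣ n - k then pA A k else 0) := Finset.sum_comm
    _ = ∑ k ∈ Finset.range n,
          pA A k * ((Finset.range (n + 1)).filter (fun a => a ∈ A ∧ a ∣ n - k)).card := by
        refine Finset.sum_congr rfl fun k hk => ?_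
        rw [← Finset.sum_filter, Finset.sum_const, smul_eq_mul, mul_comm]
theorem stmt4 (n : ℕ) (hn : 0 < n) :
    NpA {p : ℕ | p.Prime} n =
      ∑ k ∈ Finset.range n, pA {p : ℕ | p.Prime} k * (n - k).primeFactors.card := by
  classical
  rw [main {p : ℕ | p.Prime} (fun a ha => Nat.Prime.pos ha) n]
  refine Finset.sum_congr rfl fun k hk => ?_
  rw [Finset.mem_range] at hk
  congr 2
  ext a
  simp only [Finset.mem_filter, Finset.mem_range, Nat.mem_primeFactors, Set.mem_setOf_eq]
  constructor
  · rintro ⟨-, hp, hd⟩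
    exact ⟨hp, hd, by omega⟩
  · rintro ⟨hp, hd, hne⟩
    have := Nat.le_of_dvd (by omega) hd
    exact ⟨by omega, hp, hd⟩
end

section
/- For every positive integer n, Σ_{k=1}^{n} N^p_A(k) · (q^e_A(n−k) − q^o_A(n−k)) = τ_A(n), where N^p_A(k) is the total number of parts over all partitions of k with parts from A, q^e_A(m) (resp. q^o_A(m)) is the number of partitions of m into an even (resp. odd) number of distinct parts from A (with q^e_A(0)=1, q^o_A(0)=0), and τ_A(n) = Σ_{a∈A, a∣n} 1. -/
open scoped Classical
open Finset

namespace Stmt8Aux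

open Multiset in
/-- Multisets with elements in `S` summing to `m` (inside a carrier with counts `≤ N`). -/
noncomputable def MS (S : Finset ℕ) (N m : ℕ) : Finset (Multiset ℕ) :=
  ((S.val.bind fun a => Multiset.replicate N a).powerset.toFinset).filter
    fun M => M.sum = m ∧ ∀ x ∈ M, x ∈ S

lemma count_mul_le_sum (M : Multiset ℕ) (a : ℕ) : M.count a * a ≤ M.sum := by
  have h1 : (M.filter (· = a)).sum ≤ M.sum := by
    conv_rhs => rw [← Multiset.filter_add_not (· = a) M]
    rw [Multiset.sum_add]; exact Nat.le_add_right _ _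
  rwa [Multiset.filter_eq', Multiset.sum_replicate, smul_eq_mul] at h1

lemma count_le_sum {M : Multiset ℕ} (h : ∀ x ∈ M, 0 < x) (a : ℕ) : M.count a ≤ M.sum := by
  by_cases ha : a ∈ M
  · calc M.count a ≤ M.count a * a := Nat.le_mul_of_pos_right _ (h a ha)
      _ ≤ M.sum := count_mul_le_sum M a
  · simp [Multiset.count_eq_zero_of_notMem ha]

lemma mem_carrier {S : Finset ℕ} {N : ℕ} {M : Multiset ℕ} (hS : ∀ a ∈ S, 0 < a)
    (h1 : ∀ x ∈ M, x ∈ S) (h2 : M.sum ≤ N) :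
    M ∈ ((S.val.bind fun a => Multiset.replicate N a).powerset.toFinset) := by
  rw [Multiset.mem_toFinset, Multiset.mem_powerset, Multiset.le_iff_count]
  intro a
  by_cases ha : a ∈ M
  · have haS : a ∈ S := h1 a ha
    rw [Multiset.count_bind]
    have h3 : (Multiset.map (fun b => (Multiset.replicate N b).count a) S.val).sum ≥ N := by
      have h2' : ((fun b => (Multiset.replicate N b).count a) a)
          ∈ Multiset.map (fun b => (Multiset.replicate N b).count a) S.val :=
        Multiset.mem_map_of_mem _ (by exact haS)
      have h3 := Multiset.single_le_sum (fun x _ => Nat.zero_le x) _ h2'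
      simpa using h3
    refine le_trans ?_ h3
    calc M.count a ≤ M.sum := count_le_sum (fun x hx => hS x (h1 x hx)) a
      _ ≤ N := h2
  · simp [Multiset.count_eq_zero_of_notMem ha]

lemma mem_MS {S : Finset ℕ} {N m : ℕ} {M : Multiset ℕ} (hS : ∀ a ∈ S, 0 < a) (hm : m ≤ N) :
    M ∈ MS S N m ↔ M.sum = m ∧ ∀ x ∈ M, x ∈ S := by
  unfold MS
  rw [Finset.mem_filter, and_iff_right_iff_imp]
  rintro ⟨hsum, hmem⟩
  exact mem_carrier hS hmem (hsum ▸ hm)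

/-- The allowed parts: elements of `A` between `1` and `n`. -/
noncomputable def SA (A : Set ℕ) (n : ℕ) : Finset ℕ := (Finset.Icc 1 n).filter (· ∈ A)

lemma mem_SA {A : Set ℕ} {n a : ℕ} : a ∈ SA A n ↔ (1 ≤ a ∧ a ≤ n) ∧ a ∈ A := by
  simp [SA]

lemma SA_pos {A : Set ℕ} {n : ℕ} : ∀ a ∈ SA A n, 0 < a := by
  intro a ha
  rcases mem_SA.mp ha with ⟨⟨h1, _⟩, _⟩
  omega

lemma partition_sum_eq {A : Set ℕ} {n m : ℕ} (hm : m ≤ n) (f : Multiset ℕ → ℤ) :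
    (∑ p : m.Partition, if ∀ x ∈ p.parts, x ∈ A then f p.parts else 0)
      = ∑ M ∈ MS (SA A n) n m, f M := by
  rw [← Finset.sum_filter]
  refine Finset.sum_bij' (fun p _ => p.parts)
    (fun M hM => ⟨M, fun {i} hi => SA_pos i (((mem_MS SA_pos hm).mp hM).2 i hi),
      ((mem_MS SA_pos hm).mp hM).1⟩) ?_ ?_ ?_ ?_ ?_
  · intro p hp
    rw [Finset.mem_filter] at hp
    rw [mem_MS SA_pos hm]
    refine ⟨p.parts_sum, fun x hx => ?_⟩
    rw [mem_SA]
    refine ⟨⟨p.parts_pos hx, ?_⟩, hp.2 x hx⟩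
    calc x ≤ p.parts.sum := Multiset.single_le_sum (fun y _ => Nat.zero_le y) x hx
      _ = m := p.parts_sum
      _ ≤ n := hm
  · intro M hM
    rw [Finset.mem_filter]
    refine ⟨Finset.mem_univ _, fun x hx => ?_⟩
    exact (mem_SA.mp (((mem_MS SA_pos hm).mp hM).2 x hx)).2
  · intro p hp; exact Nat.Partition.ext rfl
  · intro M hM; rfl
  · intro p hp; rfl

lemma distinct_sum_eq {A : Set ℕ} {n r : ℕ} (hr : r ≤ n) (f : Multiset ℕ → ℤ) :
    (∑ p : r.Partition, if (∀ x ∈ p.parts, x ∈ A) ∧ p.parts.Nodup then f p.parts else 0)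
      = ∑ T ∈ (SA A n).powerset.filter (fun T => T.val.sum = r), f T.val := by
  rw [← Finset.sum_filter]
  refine Finset.sum_bij' (fun p hp => (⟨p.parts, (Finset.mem_filter.mp hp).2.2⟩ : Finset ℕ))
    (fun T hT => ⟨T.val, fun {i} hi => SA_pos i
        ((Finset.mem_powerset.mp (Finset.mem_filter.mp hT).1) hi),
      (Finset.mem_filter.mp hT).2⟩) ?_ ?_ ?_ ?_ ?_
  · intro p hp
    rw [Finset.mem_filter] at hp ⊢
    constructor
    · rw [Finset.mem_powerset]
      intro x hx
      have hx' : x ∈ p.parts := hx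
      rw [mem_SA]
      refine ⟨⟨p.parts_pos hx', ?_⟩, hp.2.1 x hx'⟩
      calc x ≤ p.parts.sum := Multiset.single_le_sum (fun y _ => Nat.zero_le y) x hx'
        _ = r := p.parts_sum
        _ ≤ n := hr
    · exact p.parts_sum
  · intro T hT
    rw [Finset.mem_filter]
    refine ⟨Finset.mem_univ _, fun x hx => ?_, T.nodup⟩
    exact (mem_SA.mp ((Finset.mem_powerset.mp (Finset.mem_filter.mp hT).1) hx)).2
  · intro p hp; exact Nat.Partition.ext rfl
  · intro T hT; rfl
  · intro p hp; rfl

lemma pA_eq {A : Set ℕ} {n m : ℕ} (hm : m ≤ n) :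
    (pA A m : ℤ) = ((MS (SA A n) n m).card : ℤ) := by
  have h1 : (pA A m : ℤ) = ∑ p : m.Partition, if ∀ x ∈ p.parts, x ∈ A then (1 : ℤ) else 0 := by
    rw [pA]; push_cast; simp [apply_ite (Nat.cast : ℕ → ℤ)]
  rw [h1, partition_sum_eq hm (fun _ => (1 : ℤ))]
  simp

lemma NpA_eq {A : Set ℕ} {n k : ℕ} (hk : k ≤ n) :
    (NpA A k : ℤ) = ∑ M ∈ MS (SA A n) n k, (Multiset.card M : ℤ) := by
  have h1 : (NpA A k : ℤ)
      = ∑ p : k.Partition, if ∀ x ∈ p.parts, x ∈ A then ((Multiset.card p.parts : ℕ) : ℤ) else 0 := by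
    rw [NpA]; push_cast; simp [apply_ite (Nat.cast : ℕ → ℤ)]
  rw [h1, partition_sum_eq hk (fun M => (Multiset.card M : ℤ))]

lemma qd_eq {A : Set ℕ} {n r : ℕ} (hr : r ≤ n) :
    (qeA A r : ℤ) - (qoA A r : ℤ)
      = ∑ T ∈ (SA A n).powerset.filter (fun T => T.val.sum = r), (-1 : ℤ) ^ T.card := by
  have h1 : (qeA A r : ℤ) - (qoA A r : ℤ)
      = ∑ p : r.Partition, if (∀ x ∈ p.parts, x ∈ A) ∧ p.parts.Nodup
          then (-1 : ℤ) ^ (Multiset.card p.parts) else 0 := by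
    rw [qeA, qoA]
    push_cast
    rw [← Finset.sum_sub_distrib]
    refine Finset.sum_congr rfl fun p _ => ?_
    by_cases hc : (∀ x ∈ p.parts, x ∈ A) ∧ p.parts.Nodup
    · rcases Nat.even_or_odd (Multiset.card p.parts) with he | ho
      · rw [if_pos ⟨hc.1, hc.2, he⟩, if_neg (by simp [Nat.not_odd_iff_even.mpr he]),
          if_pos hc, he.neg_one_pow]
        norm_num
      · rw [if_neg (by simp [Nat.not_even_iff_odd.mpr ho]), if_pos ⟨hc.1, hc.2, ho⟩,
          if_pos hc, ho.neg_one_pow]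
        norm_num
    · rw [if_neg (by tauto), if_neg (by tauto), if_neg hc]
      norm_num
  rw [h1, distinct_sum_eq hr (fun M => (-1 : ℤ) ^ (Multiset.card M))]
  rfl

lemma card_MS_filter_count {S : Finset ℕ} (hS : ∀ a ∈ S, 0 < a) {n k a i : ℕ} (ha : a ∈ S)
    (hik : i * a ≤ k) (hk : k ≤ n) :
    ((MS S n k).filter fun M => i ≤ M.count a).card = (MS S n (k - i * a)).card := by
  have hk' : k - i * a ≤ n := by omega
  refine Finset.card_bij' (fun M _ => M - Multiset.replicate i a)
    (fun M _ => M + Multiset.replicate i a) ?_ ?_ ?_ ?_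
  · intro M hM
    rw [Finset.mem_filter] at hM
    obtain ⟨hM1, hcnt⟩ := hM
    rw [mem_MS hS hk] at hM1
    have hle : Multiset.replicate i a ≤ M := (Multiset.le_count_iff_replicate_le).mp hcnt
    rw [mem_MS hS hk']
    constructor
    · show (M - Multiset.replicate i a).sum = k - i * a
      have h2 : (M - Multiset.replicate i a) + Multiset.replicate i a = M :=
        tsub_add_cancel_of_le hle
      have h3 := congrArg Multiset.sum h2
      rw [Multiset.sum_add, Multiset.sum_replicate, smul_eq_mul, hM1.1] at h3
      omega
    · intro x hx
      exact hM1.2 x (Multiset.mem_of_le (Multiset.sub_le_self _ _) hx)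
  · intro M hM
    rw [mem_MS hS hk'] at hM
    rw [Finset.mem_filter, mem_MS hS hk]
    refine ⟨⟨?_, ?_⟩, ?_⟩
    · rw [Multiset.sum_add, Multiset.sum_replicate, smul_eq_mul, hM.1]; omega
    · intro x hx
      rcases Multiset.mem_add.mp hx with h | h
      · exact hM.2 x h
      · rwa [Multiset.eq_of_mem_replicate h]
    · rw [Multiset.count_add, Multiset.count_replicate_self]; omega
  · intro M hM
    rw [Finset.mem_filter] at hM
    exact tsub_add_cancel_of_le ((Multiset.le_count_iff_replicate_le).mp hM.2)
  · intro M hM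
    show M + Multiset.replicate i a - Multiset.replicate i a = M
    exact add_tsub_cancel_right _ _

lemma sum_count_eq {S : Finset ℕ} (hS : ∀ a ∈ S, 0 < a) {n k a : ℕ} (ha : a ∈ S) (hk : k ≤ n) :
    ∑ M ∈ MS S n k, (M.count a : ℤ)
      = ∑ i ∈ Finset.Icc 1 n, (if i * a ≤ k then ((MS S n (k - i * a)).card : ℤ) else 0) := by
  have h1 : ∀ M ∈ MS S n k, (M.count a : ℤ)
      = ∑ i ∈ Finset.Icc 1 n, (if i ≤ M.count a then (1 : ℤ) else 0) := by
    intro M hM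
    rw [mem_MS hS hk] at hM
    have hc : M.count a ≤ n := by
      calc M.count a ≤ M.sum := count_le_sum (fun x hx => hS x (hM.2 x hx)) a
        _ = k := hM.1
        _ ≤ n := hk
    rw [← Finset.sum_filter]
    have : (Finset.Icc 1 n).filter (fun i => i ≤ M.count a) = Finset.Icc 1 (M.count a) := by
      ext i
      simp only [Finset.mem_filter, Finset.mem_Icc]
      omega
    rw [this]
    simp
  rw [Finset.sum_congr rfl h1, Finset.sum_comm]
  refine Finset.sum_congr rfl fun i hi => ?_
  have haM : ∀ M ∈ MS S n k, M.count a * a ≤ k := by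
    intro M hM
    rw [mem_MS hS hk] at hM
    calc M.count a * a ≤ M.sum := by rw [← hM.1] at *; exact count_mul_le_sum M a
      _ = k := hM.1
  by_cases h : i * a ≤ k
  · rw [if_pos h, ← card_MS_filter_count hS ha h hk, ← Finset.sum_filter]
    simp
  · rw [if_neg h]
    refine Finset.sum_eq_zero fun M hM => ?_
    rw [if_neg]
    intro hcnt
    have hi1 : 1 ≤ i := (Finset.mem_Icc.mp hi).1
    have := haM M hM
    have : i * a ≤ M.count a * a := Nat.mul_le_mul_right a hcnt
    omega

lemma reindex {A : Set ℕ} {n k : ℕ} (hk : k ≤ n) (f : ℕ → ℤ) :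
    (∑ a ∈ SA A n, ∑ i ∈ Finset.Icc 1 n, (if i * a ≤ k then f (i * a) else 0))
      = ∑ j ∈ Finset.Icc 1 k, (tauA A j : ℤ) * f j := by
  have h1 : ∀ a ∈ SA A n, (∑ i ∈ Finset.Icc 1 n, (if i * a ≤ k then f (i * a) else 0))
      = ∑ i ∈ (Finset.Icc 1 n).filter (fun i => i * a ≤ k), f (i * a) :=
    fun a _ => (Finset.sum_filter _ _).symm
  rw [Finset.sum_congr rfl h1, Finset.sum_sigma']
  have h2 : ∀ j ∈ Finset.Icc 1 k, (tauA A j : ℤ) * f j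
      = ∑ _a ∈ j.divisors.filter (· ∈ A), f j := by
    intro j _
    rw [Finset.sum_const, tauA, nsmul_eq_mul]
  rw [Finset.sum_congr rfl h2, Finset.sum_sigma']
  refine Finset.sum_bij' (fun x _ => (⟨x.2 * x.1, x.1⟩ : (_ : ℕ) × ℕ))
    (fun y _ => (⟨y.2, y.1 / y.2⟩ : (_ : ℕ) × ℕ)) ?_ ?_ ?_ ?_ ?_
  · rintro ⟨a, i⟩ hx
    rw [Finset.mem_sigma, Finset.mem_filter, Finset.mem_Icc] at hx
    obtain ⟨haS, ⟨hi1, hi2⟩, hiak⟩ := hx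
    rcases mem_SA.mp haS with ⟨⟨ha1, ha2⟩, haA⟩
    show (⟨i * a, a⟩ : (_ : ℕ) × ℕ) ∈ _
    simp only [Finset.mem_sigma, Finset.mem_Icc, Finset.mem_filter, Nat.mem_divisors]
    refine ⟨⟨?_, hiak⟩, ⟨⟨i, by ring⟩, ?_⟩, haA⟩
    · exact Nat.one_le_iff_ne_zero.mpr (by positivity)
    · positivity
  · rintro ⟨j, a⟩ hy
    simp only [Finset.mem_sigma, Finset.mem_Icc, Finset.mem_filter, Nat.mem_divisors] at hy
    obtain ⟨⟨hj1, hj2⟩, ⟨hdvd, hj0⟩, haA⟩ := hy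
    have ha0 : 0 < a := Nat.pos_of_dvd_of_pos hdvd (by omega)
    have haj : a ≤ j := Nat.le_of_dvd (by omega) hdvd
    show (⟨a, j / a⟩ : (_ : ℕ) × ℕ) ∈ _
    simp only [Finset.mem_sigma, Finset.mem_filter, Finset.mem_Icc, mem_SA]
    refine ⟨⟨⟨ha0, by omega⟩, haA⟩, ⟨?_, ?_⟩, ?_⟩
    · rw [Nat.one_le_div_iff ha0]; exact haj
    · calc j / a ≤ j := Nat.div_le_self _ _
        _ ≤ n := by omega
    · rw [Nat.div_mul_cancel hdvd]; omega
  · rintro ⟨a, i⟩ hx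
    simp only [Finset.mem_sigma] at hx
    rcases mem_SA.mp hx.1 with ⟨⟨ha1, _⟩, _⟩
    show (⟨a, i * a / a⟩ : (_ : ℕ) × ℕ) = ⟨a, i⟩
    congr 1
    exact Nat.mul_div_cancel _ (by omega)
  · rintro ⟨j, a⟩ hy
    simp only [Finset.mem_sigma, Finset.mem_filter, Nat.mem_divisors] at hy
    show (⟨j / a * a, a⟩ : (_ : ℕ) × ℕ) = ⟨j, a⟩
    congr 1
    exact Nat.div_mul_cancel hy.2.1.1
  · rintro ⟨a, i⟩ _; rfl

lemma NpA_formula {A : Set ℕ} {n k : ℕ} (hk : k ≤ n) :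
    (NpA A k : ℤ)
      = ∑ j ∈ Finset.Icc 1 k, (tauA A j : ℤ) * ((MS (SA A n) n (k - j)).card : ℤ) := by
  rw [NpA_eq hk]
  have h1 : ∀ M ∈ MS (SA A n) n k, (Multiset.card M : ℤ) = ∑ a ∈ SA A n, (M.count a : ℤ) := by
    intro M hM
    rw [mem_MS SA_pos hk] at hM
    rw [← Nat.cast_sum]
    congr 1
    rw [← Multiset.toFinset_sum_count_eq M]
    refine Finset.sum_subset ?_ ?_
    · intro x hx
      exact hM.2 x (Multiset.mem_toFinset.mp hx)
    · intro x _ hx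
      exact Multiset.count_eq_zero_of_notMem (fun h => hx (Multiset.mem_toFinset.mpr h))
  rw [Finset.sum_congr rfl h1, Finset.sum_comm]
  have h2 : ∀ a ∈ SA A n, (∑ M ∈ MS (SA A n) n k, (M.count a : ℤ))
      = ∑ i ∈ Finset.Icc 1 n, (if i * a ≤ k then ((MS (SA A n) n (k - i * a)).card : ℤ) else 0) :=
    fun a ha => sum_count_eq SA_pos ha hk
  rw [Finset.sum_congr rfl h2]
  exact reindex hk (fun j => ((MS (SA A n) n (k - j)).card : ℤ))

lemma multiset_sup_mem {s : Multiset ℕ} (h : s ≠ 0) : s.sup ∈ s := by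
  induction s using Multiset.induction with
  | empty => simp at h
  | cons a t ih =>
    rw [Multiset.sup_cons]
    rcases eq_or_ne t 0 with rfl | ht
    · simp
    · rcases le_total a t.sup with h1 | h1
      · rw [sup_eq_right.mpr h1]
        exact Multiset.mem_cons_of_mem (ih ht)
      · rw [sup_eq_left.mpr h1]
        exact Multiset.mem_cons_self _ _

/-- Pairs (multiset, distinct subset) with total sum `N`. -/
noncomputable def EE (S : Finset ℕ) (n N : ℕ) : Finset (Multiset ℕ × Finset ℕ) :=
  (((S.val.bind fun a => Multiset.replicate n a).powerset.toFinset) ×ˢ S.powerset).filter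
    fun x => (∀ y ∈ x.1, y ∈ S) ∧ x.1.sum + x.2.val.sum = N

lemma mem_EE {S : Finset ℕ} {n N : ℕ} {x : Multiset ℕ × Finset ℕ}
    (hS : ∀ a ∈ S, 0 < a) (hN : N ≤ n) :
    x ∈ EE S n N ↔ (∀ y ∈ x.1, y ∈ S) ∧ x.2 ⊆ S ∧ x.1.sum + x.2.val.sum = N := by
  unfold EE
  rw [Finset.mem_filter, Finset.mem_product, Finset.mem_powerset]
  constructor
  · rintro ⟨⟨h1, h2⟩, h3, h4⟩
    exact ⟨h3, h2, h4⟩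
  · rintro ⟨h1, h2, h3⟩
    exact ⟨⟨mem_carrier hS h1 (by omega), h2⟩, h1, h3⟩

/-- The involution. -/
noncomputable def gi (x : Multiset ℕ × Finset ℕ) : Multiset ℕ × Finset ℕ :=
  let a := (x.1 + x.2.val).sup
  if a ∈ x.2 then (a ::ₘ x.1, x.2.erase a) else (x.1.erase a, insert a x.2)

lemma gi_pos {x : Multiset ℕ × Finset ℕ} {a : ℕ} (ha : (x.1 + x.2.val).sup = a)
    (haT : a ∈ x.2) : gi x = (a ::ₘ x.1, x.2.erase a) := by
  simp only [gi]
  rw [ha, if_pos haT]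

lemma gi_neg {x : Multiset ℕ × Finset ℕ} {a : ℕ} (ha : (x.1 + x.2.val).sup = a)
    (haT : a ∉ x.2) : gi x = (x.1.erase a, insert a x.2) := by
  simp only [gi]
  rw [ha, if_neg haT]

lemma conv_zero {S : Finset ℕ} {n N : ℕ} (hS : ∀ a ∈ S, 0 < a) (hN0 : 0 < N) (hNn : N ≤ n) :
    ∑ m ∈ Finset.range (N + 1), ((MS S n m).card : ℤ) *
      (∑ T ∈ S.powerset.filter (fun T => T.val.sum = N - m), (-1 : ℤ) ^ T.card) = 0 := by
  -- fiber decomposition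
  have fiber : ∀ m ∈ Finset.range (N + 1),
      (EE S n N).filter (fun x => x.1.sum = m)
        = (MS S n m) ×ˢ (S.powerset.filter fun T => T.val.sum = N - m) := by
    intro m hm
    rw [Finset.mem_range] at hm
    ext x
    rw [Finset.mem_filter, mem_EE hS (by omega), Finset.mem_product,
      mem_MS hS (by omega : m ≤ n), Finset.mem_filter, Finset.mem_powerset]
    constructor
    · rintro ⟨⟨h1, h2, h3⟩, h4⟩
      exact ⟨⟨h4, h1⟩, h2, by omega⟩
    · rintro ⟨⟨h1, h2⟩, h3, h4⟩
      exact ⟨⟨h2, h3, by omega⟩, h1⟩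
  have key : ∀ m ∈ Finset.range (N + 1),
      ((MS S n m).card : ℤ) *
          (∑ T ∈ S.powerset.filter (fun T => T.val.sum = N - m), (-1 : ℤ) ^ T.card)
        = ∑ x ∈ (EE S n N).filter (fun x => x.1.sum = m), (-1 : ℤ) ^ x.2.card := by
    intro m hm
    rw [fiber m hm, Finset.sum_product]
    dsimp only
    rw [Finset.sum_const, nsmul_eq_mul]
  rw [Finset.sum_congr rfl key]
  have maps : ∀ x ∈ EE S n N, x.1.sum ∈ Finset.range (N + 1) := by
    intro x hx
    rw [mem_EE hS hNn] at hx
    rw [Finset.mem_range]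
    omega
  rw [Finset.sum_fiberwise_of_maps_to maps]
  -- now the involution
  have gprop : ∀ x ∈ EE S n N, gi x ∈ EE S n N ∧ gi (gi x) = x ∧
      ((-1 : ℤ) ^ x.2.card + (-1 : ℤ) ^ (gi x).2.card = 0) ∧ gi x ≠ x := by
    intro x hx
    rw [mem_EE hS hNn] at hx
    obtain ⟨hmem, hsub, hsum⟩ := hx
    have hcomb : x.1 + x.2.val ≠ 0 := by
      intro h
      have h' := congrArg Multiset.sum h
      rw [Multiset.sum_add] at h'
      simp only [Multiset.sum_zero] at h'
      omega
    obtain ⟨a, ha⟩ : ∃ a, (x.1 + x.2.val).sup = a := ⟨_, rfl⟩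
    have hamem : a ∈ x.1 + x.2.val := ha ▸ multiset_sup_mem hcomb
    have haS : a ∈ S := by
      rcases Multiset.mem_add.mp hamem with h | h
      · exact hmem a h
      · exact hsub h
    by_cases haT : a ∈ x.2
    · have hgi : gi x = (a ::ₘ x.1, x.2.erase a) := gi_pos ha haT
      have hTval : a ::ₘ (x.2.erase a).val = x.2.val := by
        rw [Finset.erase_val]
        exact Multiset.cons_erase (by exact haT)
      have hTsum : a + (x.2.erase a).val.sum = x.2.val.sum := by
        have h := congrArg Multiset.sum hTval
        rwa [Multiset.sum_cons] at h
      have hmem' : gi x ∈ EE S n N := by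
        rw [hgi, mem_EE hS hNn]
        refine ⟨?_, ?_, ?_⟩
        · intro y hy
          rcases Multiset.mem_cons.mp hy with rfl | h
          · exact haS
          · exact hmem y h
        · exact (Finset.erase_subset _ _).trans hsub
        · show (a ::ₘ x.1).sum + (x.2.erase a).val.sum = N
          rw [Multiset.sum_cons]
          omega
      have comb' : (a ::ₘ x.1) + (x.2.erase a).val = x.1 + x.2.val := by
        rw [Multiset.cons_add, ← Multiset.add_cons, hTval]
      refine ⟨hmem', ?_, ?_, ?_⟩
      · rw [hgi, gi_neg (x := (a ::ₘ x.1, x.2.erase a)) (a := a)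
          (by rw [show (a ::ₘ x.1, x.2.erase a).1 + (a ::ₘ x.1, x.2.erase a).2.val
                = x.1 + x.2.val from comb', ha])
          (Finset.notMem_erase a x.2)]
        rw [Prod.mk.injEq]
        exact ⟨Multiset.erase_cons_head a x.1, Finset.insert_erase haT⟩
      · rw [hgi]
        have hc := Finset.card_erase_add_one haT
        show (-1 : ℤ) ^ x.2.card + (-1 : ℤ) ^ (x.2.erase a).card = 0
        rw [← hc, pow_succ]
        ring
      · rw [hgi]
        intro h
        have h2 := congrArg Prod.snd h
        simp only at h2
        exact (Finset.erase_eq_self.mp h2) haT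
    · have haM : a ∈ x.1 := by
        rcases Multiset.mem_add.mp hamem with h | h
        · exact h
        · exact absurd h haT
      have hgi : gi x = (x.1.erase a, insert a x.2) := gi_neg ha haT
      have hIval : (insert a x.2).val = a ::ₘ x.2.val := Finset.insert_val_of_notMem haT
      have hMval : a ::ₘ x.1.erase a = x.1 := Multiset.cons_erase haM
      have hMsum : a + (x.1.erase a).sum = x.1.sum := by
        have h := congrArg Multiset.sum hMval
        rwa [Multiset.sum_cons] at h
      have hmem' : gi x ∈ EE S n N := by
        rw [hgi, mem_EE hS hNn]
        refine ⟨?_, ?_, ?_⟩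
        · intro y hy
          exact hmem y (Multiset.mem_of_le (Multiset.erase_le a x.1) hy)
        · intro y hy
          rcases Finset.mem_insert.mp hy with rfl | h
          · exact haS
          · exact hsub h
        · show (x.1.erase a).sum + (insert a x.2).val.sum = N
          rw [hIval, Multiset.sum_cons]
          omega
      have comb' : (x.1.erase a) + (insert a x.2).val = x.1 + x.2.val := by
        rw [hIval, Multiset.add_cons, ← Multiset.cons_add, hMval]
      refine ⟨hmem', ?_, ?_, ?_⟩
      · rw [hgi, gi_pos (x := (x.1.erase a, insert a x.2)) (a := a)
          (by rw [show (x.1.erase a, insert a x.2).1 + (x.1.erase a, insert a x.2).2.val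
                = x.1 + x.2.val from comb', ha])
          (Finset.mem_insert_self a x.2)]
        rw [Prod.mk.injEq]
        exact ⟨hMval, Finset.erase_insert haT⟩
      · rw [hgi]
        have hc := Finset.card_insert_of_notMem haT
        show (-1 : ℤ) ^ x.2.card + (-1 : ℤ) ^ (insert a x.2).card = 0
        rw [hc, pow_succ]
        ring
      · rw [hgi]
        intro h
        have h2 := congrArg Prod.snd h
        simp only at h2
        exact haT (h2 ▸ Finset.mem_insert_self a x.2)
  exact Finset.sum_involution (fun x _ => gi x)
    (fun x hx => (gprop x hx).2.2.1)
    (fun x hx _ => (gprop x hx).2.2.2)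
    (fun x hx => (gprop x hx).1)
    (fun x hx => (gprop x hx).2.1)

lemma MS_zero {S : Finset ℕ} {n : ℕ} (hS : ∀ a ∈ S, 0 < a) : MS S n 0 = {0} := by
  ext M
  rw [mem_MS hS (Nat.zero_le _), Finset.mem_singleton]
  constructor
  · rintro ⟨h1, h2⟩
    rw [Multiset.eq_zero_iff_forall_notMem]
    intro x hx
    have := hS x (h2 x hx)
    have hx0 : x = 0 := by
      have := Multiset.single_le_sum (fun y _ => Nat.zero_le y) x hx
      omega
    omega
  · rintro rfl
    simp
lemma powerset_sum_zero {S : Finset ℕ} (hS : ∀ a ∈ S, 0 < a) :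
    S.powerset.filter (fun T => T.val.sum = 0) = {∅} := by
  ext T
  rw [Finset.mem_filter, Finset.mem_powerset, Finset.mem_singleton]
  constructor
  · rintro ⟨h1, h2⟩
    ext x
    simp only [Finset.notMem_empty, iff_false]
    intro hx
    have := hS x (h1 hx)
    have hx' : x ∈ T.val := hx
    have := Multiset.single_le_sum (fun y _ => Nat.zero_le y) x hx'
    omega
  · rintro rfl
    simp

end Stmt8Aux

theorem stmt8 (A : Set ℕ) (hA : ∀ a ∈ A, 0 < a) (n : ℕ) (hn : 0 < n) :
    ∑ k ∈ Finset.Icc 1 n, (NpA A k : ℤ) * ((qeA A (n - k) : ℤ) - (qoA A (n - k) : ℤ)) =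
      tauA A n := by
  classical
  open Stmt8Aux in
  have hS : ∀ a ∈ SA A n, 0 < a := SA_pos
  set P : ℕ → ℤ := fun m => ((MS (SA A n) n m).card : ℤ) with hP
  set D : ℕ → ℤ := fun r =>
    ∑ T ∈ (SA A n).powerset.filter (fun T => T.val.sum = r), (-1 : ℤ) ^ T.card with hD
  have key1 : ∀ k ∈ Finset.Icc 1 n,
      (NpA A k : ℤ) * ((qeA A (n - k) : ℤ) - (qoA A (n - k) : ℤ))
        = ∑ j ∈ Finset.Icc 1 k, (tauA A j : ℤ) * (P (k - j) * D (n - k)) := by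
    intro k hk
    rw [Finset.mem_Icc] at hk
    rw [NpA_formula (n := n) hk.2, qd_eq (n := n) (by omega : n - k ≤ n), Finset.sum_mul]
    exact Finset.sum_congr rfl fun j _ => by rw [hP, hD]; ring
  rw [Finset.sum_congr rfl key1]
  rw [Finset.sum_comm' (t' := Finset.Icc 1 n) (s' := fun j => Finset.Icc j n)
    (by intro k j; simp only [Finset.mem_Icc]; omega)]
  have key2 : ∀ j ∈ Finset.Icc 1 n,
      (∑ k ∈ Finset.Icc j n, (tauA A j : ℤ) * (P (k - j) * D (n - k)))
        = (tauA A j : ℤ) * (if j = n then 1 else 0) := by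
    intro j hj
    rw [Finset.mem_Icc] at hj
    rw [← Finset.mul_sum]
    congr 1
    have h0 : Finset.Icc j n = Finset.Ico j (n + 1) := by
      rw [Finset.Ico_add_one_right_eq_Icc]
    rw [h0, Finset.sum_Ico_eq_sum_range]
    have h1 : ∀ i ∈ Finset.range (n + 1 - j), P (j + i - j) * D (n - (j + i))
        = P i * D ((n - j) - i) := by
      intro i _
      rw [show j + i - j = i by omega, show n - (j + i) = (n - j) - i by omega]
    rw [Finset.sum_congr rfl h1, show n + 1 - j = (n - j) + 1 by omega]
    rcases eq_or_ne j n with rfl | hne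
    · rw [if_pos rfl]
      simp only [Nat.sub_self, zero_add, Finset.sum_range_one, Nat.sub_zero]
      rw [hP, hD]
      simp only
      rw [MS_zero hS, powerset_sum_zero hS]
      simp
    · rw [if_neg hne]
      exact conv_zero hS (by omega) (by omega)
  rw [Finset.sum_congr rfl key2]
  rw [Finset.sum_eq_single_of_mem n (Finset.mem_Icc.mpr ⟨hn, le_refl n⟩)
    (fun j _ hj => by rw [if_neg hj, mul_zero])]
  rw [if_pos rfl, mul_one]
end

section
/- For every positive integer n, Σ_{k=1}^{n} (−1)^{n−k} N^q(k) · o(n−k) = τ^s(n), where N^q(k) is the total number of parts over all partitions of k into distinct parts, o(m) is the number of partitions of m into distinct odd parts (with o(0)=1), and τ^s(n) = Σ_{d∣n} (−1)^{n/d − 1}. -/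
open scoped Classical
open Finset

section AuxStmt11
open PowerSeries

private lemma coeff_prod_c (T : Finset ℕ) (c : ℕ → ℤ) (m : ℕ) :
    (coeff m) (∏ i ∈ T, (1 + C (c i) * X ^ i)) =
      ∑ t ∈ T.powerset, if (∑ i ∈ t, i) = m then ∏ i ∈ t, c i else 0 := by
  have h1 : ∏ i ∈ T, ((1:ℤ⟦X⟧) + C (c i) * X ^ i)
      = ∏ i ∈ T, (C (c i) * X ^ i + 1) := by
    simp [add_comm]
  rw [h1, Finset.prod_add]
  rw [map_sum]
  refine Finset.sum_congr rfl fun t ht => ?_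
  rw [Finset.prod_const_one, mul_one, Finset.prod_mul_distrib, ← map_prod,
    Finset.prod_pow_eq_pow_sum, PowerSeries.coeff_C_mul, PowerSeries.coeff_X_pow]
  by_cases h : (∑ i ∈ t, i) = m
  · simp [h]
  · rw [if_neg fun hh => h hh.symm, if_neg h, mul_zero]

private lemma part_le_sum {m : ℕ} (p : m.Partition) {x : ℕ} (hx : x ∈ p.parts) : x ≤ m := by
  have := Multiset.single_le_sum (fun y _ => Nat.zero_le y) x hx
  simpa [p.parts_sum] using this

private lemma partition_sum_eq {M : Type*} [AddCommMonoid M] (n m : ℕ) (hm : m ≤ n)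
    (P : ℕ → Prop) (F : Multiset ℕ → M) :
    ∑ t ∈ (Finset.Icc 1 n).powerset.filter
        (fun t => (∑ i ∈ t, i) = m ∧ ∀ x ∈ t, P x), F t.val
    = ∑ p ∈ (Finset.univ : Finset m.Partition).filter
        (fun p => (∀ x ∈ p.parts, P x) ∧ p.parts.Nodup), F p.parts := by
  refine Finset.sum_bij' (i := fun t ht => Nat.Partition.mk t.val ?_ ?_)
    (j := fun p hp => p.parts.toFinset) ?_ ?_ ?_ ?_ ?_
  · intro i hi
    simp only [Finset.mem_filter, Finset.mem_powerset] at ht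
    have := ht.1 hi
    simp only [Finset.mem_Icc] at this
    omega
  · simp only [Finset.mem_filter, Finset.mem_powerset] at ht
    have h2 : (∑ i ∈ t, i) = m := ht.2.1
    rw [← h2]
    exact Finset.sum_val t
  · intro t ht
    simp only [Finset.mem_filter, Finset.mem_powerset] at ht ⊢
    exact ⟨Finset.mem_univ _, ht.2.2, t.nodup⟩
  · intro p hp
    simp only [Finset.mem_filter, Finset.mem_powerset, Finset.mem_univ, true_and] at hp ⊢
    refine ⟨?_, ?_, ?_⟩
    · intro x hx
      rw [Multiset.mem_toFinset] at hx
      have h1 := p.parts_pos hx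
      have h2 := part_le_sum p hx
      simp only [Finset.mem_Icc]; omega
    · have h3 : p.parts.toFinset.val.sum = ∑ i ∈ p.parts.toFinset, i :=
        Finset.sum_val _
      rw [← h3, Multiset.toFinset_val, hp.2.dedup, p.parts_sum]
    · intro x hx
      rw [Multiset.mem_toFinset] at hx
      exact hp.1 x hx
  · intro t ht
    simp [Finset.val_toFinset]
  · intro p hp
    simp only [Finset.mem_filter, Finset.mem_univ, true_and] at hp
    ext1
    simp [Multiset.toFinset_val, hp.2.dedup]
  · intro t ht
    rfl

private noncomputable def Gg (j : ℕ) : PowerSeries ℤ :=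
  PowerSeries.mk fun m => if j ∣ m ∧ m ≠ 0 then (-1 : ℤ) ^ (m / j - 1) else 0

private lemma Gg_mul (j : ℕ) (hj : 0 < j) : (1 + X ^ j) * Gg j = (X : ℤ⟦X⟧) ^ j := by
  ext m
  rw [add_mul, one_mul, map_add, PowerSeries.coeff_X_pow]
  have hXG : (coeff m) (X ^ j * Gg j)
      = if j ≤ m then (if j ∣ m - j ∧ m - j ≠ 0 then (-1 : ℤ) ^ ((m - j) / j - 1) else 0) else 0 := by
    rw [PowerSeries.coeff_X_pow_mul']
    simp [Gg]
  rw [hXG]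
  simp only [Gg, PowerSeries.coeff_mk]
  rcases eq_or_ne m 0 with rfl | hm0
  · have h2 : ¬ j ≤ 0 := by omega
    have h3 : ¬ (0 = j) := by omega
    simp [h2, h3]
  rcases eq_or_ne m j with rfl | hmj
  · simp [hj.ne', Nat.div_self hj, hm0]
  · rw [if_neg hmj]
    by_cases hle : j ≤ m
    · rw [if_pos hle]
      by_cases hdvd : j ∣ m
      · obtain ⟨q, rfl⟩ := hdvd
        have hq0 : q ≠ 0 := by rintro rfl; simp at hm0
        have hq1 : q ≠ 1 := by rintro rfl; simp at hmj
        have hsub : j * q - j = j * (q - 1) := by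
          have := Nat.mul_sub j q 1
          simpa using this.symm
        have hd2 : j ∣ j * q - j := by rw [hsub]; exact Dvd.intro _ rfl
        have hmj0 : j * q - j ≠ 0 := by
          rw [hsub]
          have h4 : 1 ≤ q - 1 := by omega
          positivity
        rw [if_pos ⟨Dvd.intro _ rfl, hm0⟩, if_pos ⟨hd2, hmj0⟩]
        rw [hsub, Nat.mul_div_cancel_left _ hj, Nat.mul_div_cancel_left _ hj]
        have h2 : q - 1 - 1 = q - 2 := by omega
        have h1 : q - 1 = (q - 2) + 1 := by omega
        rw [h2, h1, pow_succ]
        ring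
      · have hnd : ¬ j ∣ m - j := fun h => hdvd (by
          have h5 := Nat.dvd_add h (dvd_refl j)
          rwa [Nat.sub_add_cancel hle] at h5)
        simp [hdvd, hnd]
    · rw [if_neg hle]
      have : ¬ j ∣ m := fun h => hle (Nat.le_of_dvd (Nat.pos_of_ne_zero hm0) h)
      simp [this, hle]

private noncomputable def ff (j : ℕ) : PowerSeries ℤ := 1 - X ^ j

private lemma QD (n : ℕ) :
    (∏ i ∈ Finset.Icc 1 n, (1 + (X : ℤ⟦X⟧) ^ i)) *
      (∏ i ∈ (Finset.Icc 1 n).filter (fun i => i % 2 = 1), ff i)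
    = ∏ i ∈ (Finset.Icc (n+1) (2*n)).filter (fun i => i % 2 = 0), ff i := by
  have hP : (∏ i ∈ Finset.Icc 1 n, ff i) ≠ 0 := by
    have hc : PowerSeries.constantCoeff (∏ i ∈ Finset.Icc 1 n, ff i) = 1 := by
      rw [map_prod, Finset.prod_eq_one]
      intro i hi
      rw [Finset.mem_Icc] at hi
      simp [ff, zero_pow (by omega : i ≠ 0)]
    intro h
    rw [h] at hc
    simp at hc
  apply mul_right_cancel₀ hP
  have hQP : (∏ i ∈ Finset.Icc 1 n, (1 + (X : ℤ⟦X⟧) ^ i)) * (∏ i ∈ Finset.Icc 1 n, ff i)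
      = ∏ i ∈ Finset.Icc 1 n, ff (2 * i) := by
    rw [← Finset.prod_mul_distrib]
    refine Finset.prod_congr rfl fun i hi => ?_
    simp only [ff]
    rw [pow_mul]
    ring
  have himg : ∏ i ∈ Finset.Icc 1 n, ff (2 * i)
      = ∏ j ∈ (Finset.Icc 1 (2*n)).filter (fun j => j % 2 = 0), ff j := by
    rw [← Finset.prod_image (f := ff) (g := fun i => 2 * i)
      (by intro a _ b _ h; have h2 : 2*a = 2*b := h; omega)]
    congr 1
    ext j
    simp only [Finset.mem_image, Finset.mem_filter, Finset.mem_Icc]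
    constructor
    · rintro ⟨i, ⟨h1, h2⟩, rfl⟩
      omega
    · rintro ⟨⟨h1, h2⟩, h3⟩; exact ⟨j / 2, by omega, by omega⟩
  calc (∏ i ∈ Finset.Icc 1 n, (1 + (X:ℤ⟦X⟧) ^ i)) *
      (∏ i ∈ (Finset.Icc 1 n).filter (fun i => i % 2 = 1), ff i) *
      (∏ i ∈ Finset.Icc 1 n, ff i)
      = (∏ j ∈ (Finset.Icc 1 (2*n)).filter (fun j => j % 2 = 0), ff j) *
        (∏ i ∈ (Finset.Icc 1 n).filter (fun i => i % 2 = 1), ff i) := by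
        rw [mul_right_comm, hQP, himg]
    _ = ∏ j ∈ ((Finset.Icc 1 (2*n)).filter (fun j => j % 2 = 0)) ∪
          ((Finset.Icc 1 n).filter (fun i => i % 2 = 1)), ff j := by
        rw [Finset.prod_union]
        rw [Finset.disjoint_left]
        intro a ha hb
        simp only [Finset.mem_filter] at ha hb
        omega
    _ = ∏ j ∈ ((Finset.Icc (n+1) (2*n)).filter (fun j => j % 2 = 0)) ∪ Finset.Icc 1 n, ff j := by
        congr 1
        ext j
        simp only [Finset.mem_union, Finset.mem_filter, Finset.mem_Icc]
        omega
    _ = (∏ i ∈ (Finset.Icc (n+1) (2*n)).filter (fun i => i % 2 = 0), ff i) *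
        (∏ i ∈ Finset.Icc 1 n, ff i) := by
        rw [Finset.prod_union]
        rw [Finset.disjoint_left]
        intro a ha hb
        simp only [Finset.mem_filter, Finset.mem_Icc] at ha hb
        omega

private lemma neg_one_pow_mod (a b : ℕ) (h : a % 2 = b % 2) : (-1:ℤ)^a = (-1:ℤ)^b := by
  rcases Nat.even_or_odd a with ha | ha
  · have hb : Even b := by rw [Nat.even_iff] at *; omega
    rw [ha.neg_one_pow, hb.neg_one_pow]
  · have hb : Odd b := by rw [Nat.odd_iff] at *; omega
    rw [ha.neg_one_pow, hb.neg_one_pow]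

private lemma odd_sum_parity (t : Finset ℕ) (h : ∀ x ∈ t, x % 2 = 1) :
    (∑ i ∈ t, i) % 2 = t.card % 2 := by
  induction t using Finset.induction_on with
  | empty => simp
  | @insert a s ha ih =>
    rw [Finset.sum_insert ha, Finset.card_insert_of_notMem ha]
    have h1 := h a (Finset.mem_insert_self a s)
    have h2 := ih (fun x hx => h x (Finset.mem_insert_of_mem hx))
    omega

private lemma cast_count_eq (m : ℕ) (P : ℕ → Prop) :
    ∑ p ∈ (Finset.univ : Finset m.Partition).filter
        (fun p => (∀ x ∈ p.parts, P x) ∧ p.parts.Nodup), (1:ℤ)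
    = (qA {a | P a} m : ℤ) := by
  rw [qA]
  push_cast
  rw [Finset.sum_filter]
  refine Finset.sum_congr rfl fun p _ => ?_
  simp [Set.mem_setOf_eq]

private lemma cast_NqA_eq (m : ℕ) :
    ∑ p ∈ (Finset.univ : Finset m.Partition).filter
        (fun p => (∀ x ∈ p.parts, (fun _ => True) x) ∧ p.parts.Nodup),
        ((Multiset.card p.parts : ℤ))
    = (NqA Set.univ m : ℤ) := by
  rw [NqA]
  push_cast
  rw [Finset.sum_filter]
  refine Finset.sum_congr rfl fun p _ => ?_
  simp

private lemma coeffD (n m : ℕ) (hm : m ≤ n) :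
    (coeff m) (∏ i ∈ (Finset.Icc 1 n).filter (fun i => i % 2 = 1), ff i)
    = (-1:ℤ)^m * (qA {a : ℕ | Odd a} m : ℤ) := by
  have hff : ∀ i, ff i = 1 + C ((fun _ => (-1:ℤ)) i) * X ^ i := by
    intro i
    simp only [ff, map_neg, map_one]
    ring
  rw [Finset.prod_congr rfl (fun i _ => hff i), coeff_prod_c]
  have hps : ((Finset.Icc 1 n).filter (fun i => i % 2 = 1)).powerset
      = (Finset.Icc 1 n).powerset.filter (fun t => ∀ x ∈ t, x % 2 = 1) := by
    ext t
    simp only [Finset.mem_powerset, Finset.mem_filter, Finset.subset_iff, Finset.mem_filter]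
    constructor
    · intro h
      exact ⟨fun x hx => (h hx).1, fun x hx => (h hx).2⟩
    · intro h x hx
      exact ⟨h.1 hx, h.2 x hx⟩
  rw [hps, Finset.sum_filter]
  have step : ∀ t ∈ (Finset.Icc 1 n).powerset,
      (if ∀ x ∈ t, x % 2 = 1 then (if (∑ i ∈ t, i) = m then ∏ _i ∈ t, (-1:ℤ) else 0) else 0)
      = (if (∑ i ∈ t, i) = m ∧ ∀ x ∈ t, Odd x then (-1:ℤ)^m * 1 else 0) := by
    intro t _
    by_cases h1 : ∀ x ∈ t, x % 2 = 1
    · by_cases h2 : (∑ i ∈ t, i) = m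
      · rw [if_pos h1, if_pos h2, if_pos ⟨h2, fun x hx => Nat.odd_iff.mpr (h1 x hx)⟩]
        rw [Finset.prod_const, mul_one]
        exact (neg_one_pow_mod _ _ (by rw [← odd_sum_parity t h1, h2])).symm
      · rw [if_pos h1, if_neg h2, if_neg (fun hc => h2 hc.1)]
    · rw [if_neg h1, if_neg (fun hc => h1 (fun x hx => Nat.odd_iff.mp (hc.2 x hx)))]
  refine (Finset.sum_congr rfl step).trans ?_
  refine (Finset.sum_filter _ _).symm.trans ?_
  rw [← Finset.mul_sum]
  congr 1
  have h6 : ((qA {a : ℕ | Odd a} m : ℤ)) = ∑ p ∈ (Finset.univ : Finset m.Partition).filter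
      (fun p => (∀ x ∈ p.parts, Odd x) ∧ p.parts.Nodup), (1:ℤ) := by
    rw [qA]
    push_cast
    rw [Finset.sum_filter]
    refine Finset.sum_congr rfl fun p _ => ?_
    simp [Set.mem_setOf_eq]
  rw [h6]
  convert partition_sum_eq n m hm (fun x => Odd x) (fun _ => (1:ℤ)) using 2
  · ext x
    simp [Finset.mem_filter]
  · ext p
    simp [Finset.mem_filter]

set_option maxHeartbeats 2000000 in
private lemma coeffN (n k : ℕ) (hk : k ≤ n) :
    (coeff k) (∑ j ∈ Finset.Icc 1 n,
        (X:ℤ⟦X⟧)^j * ∏ i ∈ (Finset.Icc 1 n).erase j, (1 + X^i))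
    = (NqA Set.univ k : ℤ) := by
  classical
  rw [map_sum]
  set S := (Finset.Icc 1 n).powerset.filter
    (fun s => (∑ i ∈ s, i) = k ∧ ∀ x ∈ s, (fun _ => True) x) with hS
  have hterm : ∀ j ∈ Finset.Icc 1 n,
      (coeff k) ((X:ℤ⟦X⟧)^j * ∏ i ∈ (Finset.Icc 1 n).erase j, (1 + X^i))
      = ∑ s ∈ S, (if j ∈ s then (1:ℤ) else 0) := by
    intro j hj
    rw [Finset.mem_Icc] at hj
    have hQe : ∀ d, (coeff d) (∏ i ∈ (Finset.Icc 1 n).erase j, (1 + (X:ℤ⟦X⟧)^i))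
        = ∑ t ∈ ((Finset.Icc 1 n).erase j).powerset, if (∑ i ∈ t, i) = d then (1:ℤ) else 0 := by
      intro d
      have h1 : ∀ i ∈ (Finset.Icc 1 n).erase j,
          (1 + (X:ℤ⟦X⟧)^i) = 1 + C ((fun _ => (1:ℤ)) i) * X ^ i := by
        intro i _
        simp
      rw [Finset.prod_congr rfl h1, coeff_prod_c]
      refine Finset.sum_congr rfl fun t _ => ?_
      simp
    rw [PowerSeries.coeff_X_pow_mul']
    by_cases hjk : j ≤ k
    · rw [if_pos hjk, hQe, ← Finset.sum_filter, ← Finset.sum_filter]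
      refine Finset.sum_bij' (fun t _ => insert j t) (fun s _ => s.erase j) ?_ ?_ ?_ ?_ ?_
      · intro t ht
        rw [Finset.mem_filter, Finset.mem_powerset] at ht
        have hjt : j ∉ t := fun hc => (Finset.notMem_erase j _) (ht.1 hc)
        rw [hS, Finset.mem_filter, Finset.mem_filter, Finset.mem_powerset]
        refine ⟨⟨?_, ?_, fun _ _ => trivial⟩, Finset.mem_insert_self j t⟩
        · exact Finset.insert_subset (Finset.mem_Icc.mpr hj)
            (ht.1.trans (Finset.erase_subset _ _))
        · rw [Finset.sum_insert hjt, ht.2]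
          omega
      · intro s hs
        rw [hS, Finset.mem_filter, Finset.mem_filter, Finset.mem_powerset] at hs
        rw [Finset.mem_filter, Finset.mem_powerset]
        refine ⟨Finset.erase_subset_erase j hs.1.1, ?_⟩
        have h1 : j + ∑ i ∈ s.erase j, i = ∑ i ∈ s, i :=
          Finset.add_sum_erase _ (fun i => i) hs.2
        have h2 : (∑ i ∈ s, i) = k := hs.1.2.1
        show (∑ i ∈ s.erase j, i) = k - j
        omega
      · intro t ht
        rw [Finset.mem_filter, Finset.mem_powerset] at ht
        have hjt : j ∉ t := fun hc => (Finset.notMem_erase j _) (ht.1 hc)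
        exact Finset.erase_insert hjt
      · intro s hs
        rw [hS, Finset.mem_filter, Finset.mem_filter] at hs
        exact Finset.insert_erase hs.2
      · intro t ht
        rfl
    · rw [if_neg hjk]
      symm
      refine Finset.sum_eq_zero fun s hs => ?_
      rw [hS, Finset.mem_filter, Finset.mem_powerset] at hs
      rw [if_neg]
      intro hjs
      have h3 : j ≤ ∑ i ∈ s, i :=
        Finset.single_le_sum (f := fun i => i) (fun _ _ => Nat.zero_le _) hjs
      have h4 : (∑ i ∈ s, i) = k := hs.2.1
      omega
  rw [Finset.sum_congr rfl hterm, Finset.sum_comm]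
  have hcard : ∀ s ∈ S, (∑ j ∈ Finset.Icc 1 n, if j ∈ s then (1:ℤ) else 0)
      = (Multiset.card s.val : ℤ) := by
    intro s hs
    rw [hS, Finset.mem_filter, Finset.mem_powerset] at hs
    rw [Finset.sum_ite_mem, Finset.inter_comm, Finset.inter_eq_left.mpr hs.1]
    rw [Finset.sum_const, nsmul_eq_mul, mul_one]
    rfl
  refine (Finset.sum_congr rfl hcard).trans ?_
  rw [hS]
  have h6 : ((NqA Set.univ k : ℤ)) = ∑ p ∈ (Finset.univ : Finset k.Partition).filter
      (fun p => (∀ x ∈ p.parts, True) ∧ p.parts.Nodup), (Multiset.card p.parts : ℤ) := by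
    rw [NqA]
    push_cast
    rw [Finset.sum_filter]
    refine Finset.sum_congr rfl fun p _ => ?_
    simp
  rw [h6]
  convert partition_sum_eq n k hk (fun _ => True) (fun ms => ((Multiset.card ms : ℤ))) using 2
  · ext x
    simp [Finset.mem_filter]
  · ext p
    simp [Finset.mem_filter]

private lemma coeffE (n b : ℕ) (hb : b ≤ n) :
    (coeff b) (∏ i ∈ (Finset.Icc (n+1) (2*n)).filter (fun i => i % 2 = 0), ff i)
    = if b = 0 then 1 else 0 := by
  have hff : ∀ i, ff i = 1 + C ((fun _ => (-1:ℤ)) i) * X ^ i := by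
    intro i
    simp only [ff, map_neg, map_one]
    ring
  rw [Finset.prod_congr rfl (fun i _ => hff i), coeff_prod_c]
  rw [Finset.sum_eq_single (∅ : Finset ℕ)]
  · simp [eq_comm]
  · intro t ht hne
    rw [Finset.mem_powerset] at ht
    obtain ⟨x, hx⟩ := Finset.nonempty_iff_ne_empty.mpr hne
    have hx2 := ht hx
    rw [Finset.mem_filter, Finset.mem_Icc] at hx2
    have hsum : n + 1 ≤ ∑ i ∈ t, i := by
      calc n + 1 ≤ x := hx2.1.1
      _ ≤ ∑ i ∈ t, i := Finset.single_le_sum (f := fun i => i) (fun _ _ => Nat.zero_le _) hx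
    rw [if_neg (by omega)]
  · intro h
    exact absurd (Finset.empty_mem_powerset _) h

private lemma coeffFsum (n : ℕ) (hn : 0 < n) :
    (coeff n) (∑ j ∈ Finset.Icc 1 n, Gg j) = tauSA Set.univ n := by
  rw [map_sum]
  simp only [Gg, PowerSeries.coeff_mk]
  rw [tauSA]
  have h7 : @Finset.filter ℕ (fun x => x ∈ Set.univ)
      (fun a => Classical.propDecidable (a ∈ Set.univ)) n.divisors = n.divisors := by
    ext d
    simp
  refine Eq.trans ?_ (Finset.sum_congr h7.symm (fun _ _ => rfl))
  have hsub : n.divisors ⊆ Finset.Icc 1 n := by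
    intro d hd
    rw [Nat.mem_divisors] at hd
    rw [Finset.mem_Icc]
    exact ⟨Nat.pos_of_dvd_of_pos hd.1 hn, Nat.le_of_dvd hn hd.1⟩
  rw [← Finset.sum_subset hsub (fun x _ hx => by
    rw [if_neg]
    intro hc
    exact hx (Nat.mem_divisors.mpr ⟨hc.1, hn.ne'⟩))]
  refine Finset.sum_congr rfl fun d hd => ?_
  rw [Nat.mem_divisors] at hd
  rw [if_pos ⟨hd.1, hn.ne'⟩]

private lemma NqA_zero : NqA Set.univ 0 = 0 := by
  rw [NqA]
  refine Finset.sum_eq_zero fun p _ => ?_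
  have hp : p.parts = 0 := by
    refine Multiset.eq_zero_of_forall_notMem fun x hx => ?_
    have h1 := p.parts_pos hx
    have h2 := part_le_sum p hx
    omega
  simp [hp]

end AuxStmt11

open PowerSeries in
set_option maxHeartbeats 2000000 in
theorem stmt11 (n : ℕ) (hn : 0 < n) :
    ∑ k ∈ Finset.Icc 1 n,
        (-1 : ℤ) ^ (n - k) * (NqA Set.univ k : ℤ) * (qA {a : ℕ | Odd a} (n - k) : ℤ) =
      tauSA Set.univ n := by
  classical
  have hNF : (∑ j ∈ Finset.Icc 1 n,
        (X:ℤ⟦X⟧)^j * ∏ i ∈ (Finset.Icc 1 n).erase j, (1 + X^i))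
      = (∑ j ∈ Finset.Icc 1 n, Gg j) * (∏ i ∈ Finset.Icc 1 n, (1 + (X:ℤ⟦X⟧) ^ i)) := by
    rw [Finset.sum_mul]
    refine Finset.sum_congr rfl fun j hj => ?_
    have hj1 : 0 < j := by
      rw [Finset.mem_Icc] at hj
      omega
    calc (X:ℤ⟦X⟧)^j * ∏ i ∈ (Finset.Icc 1 n).erase j, (1 + X^i)
        = ((1 + X^j) * Gg j) * ∏ i ∈ (Finset.Icc 1 n).erase j, (1 + X^i) := by
          rw [Gg_mul j hj1]
      _ = Gg j * ((1 + X^j) * ∏ i ∈ (Finset.Icc 1 n).erase j, (1 + X^i)) := by ring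
      _ = Gg j * (∏ i ∈ Finset.Icc 1 n, (1 + (X:ℤ⟦X⟧) ^ i)) := by
          rw [Finset.mul_prod_erase _ (fun i => 1 + (X:ℤ⟦X⟧)^i) hj]
  have key : (coeff n) ((∑ j ∈ Finset.Icc 1 n,
        (X:ℤ⟦X⟧)^j * ∏ i ∈ (Finset.Icc 1 n).erase j, (1 + X^i)) *
        (∏ i ∈ (Finset.Icc 1 n).filter (fun i => i % 2 = 1), ff i))
      = tauSA Set.univ n := by
    rw [hNF, mul_assoc, QD n, PowerSeries.coeff_mul,
      Finset.Nat.sum_antidiagonal_eq_sum_range_succ_mk]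
    rw [Finset.sum_eq_single_of_mem n (Finset.self_mem_range_succ n)]
    · rw [Nat.sub_self, coeffE n 0 (Nat.zero_le n), if_pos rfl, mul_one, coeffFsum n hn]
    · intro b hb hbn
      rw [Finset.mem_range] at hb
      rw [coeffE n (n - b) (by omega), if_neg (by omega), mul_zero]
  have comb : (coeff n) ((∑ j ∈ Finset.Icc 1 n,
        (X:ℤ⟦X⟧)^j * ∏ i ∈ (Finset.Icc 1 n).erase j, (1 + X^i)) *
        (∏ i ∈ (Finset.Icc 1 n).filter (fun i => i % 2 = 1), ff i))
      = ∑ k ∈ Finset.Icc 1 n,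
          (-1 : ℤ) ^ (n - k) * (NqA Set.univ k : ℤ) * (qA {a : ℕ | Odd a} (n - k) : ℤ) := by
    rw [PowerSeries.coeff_mul, Finset.Nat.sum_antidiagonal_eq_sum_range_succ_mk]
    have hrange : Finset.range (n+1) = insert 0 (Finset.Icc 1 n) := by
      ext x
      simp only [Finset.mem_range, Finset.mem_insert, Finset.mem_Icc]
      omega
    rw [hrange, Finset.sum_insert (by simp)]
    have h0 : (coeff 0) (∑ j ∈ Finset.Icc 1 n,
        (X:ℤ⟦X⟧)^j * ∏ i ∈ (Finset.Icc 1 n).erase j, (1 + X^i)) *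
        (coeff (n-0)) (∏ i ∈ (Finset.Icc 1 n).filter (fun i => i % 2 = 1), ff i) = 0 := by
      rw [coeffN n 0 (Nat.zero_le n), NqA_zero]
      simp
    rw [h0, zero_add]
    refine Finset.sum_congr rfl fun k hk => ?_
    rw [Finset.mem_Icc] at hk
    rw [coeffN n k hk.2, coeffD n (n-k) (by omega)]
    ring
  exact comb.symm.trans key
end

section
/- Let A = {2^j : j ≥ 0} and let N^p_bin(k) denote the total number of parts over all binary partitions of k. Define s(0) = 1 and s(m) = (−1)^{h(m)} for m ≥ 1, where h is the Hamming weight. Then for every positive integer n, Σ_{k=1}^{n} N^p_bin(k) · s(n−k) = v_2(n) + 1, where v_2 is the 2-adic valuation. -/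
open scoped Classical
open Finset

namespace Aux

open Multiset

lemma one_mem_binA : (1:ℕ) ∈ binA := ⟨0, rfl⟩

lemma binA_pos {a : ℕ} (h : a ∈ binA) : 0 < a := by
  obtain ⟨j, rfl⟩ := h; positivity

lemma binA_even {a : ℕ} (h : a ∈ binA) (h1 : a ≠ 1) : 2 ∣ a := by
  obtain ⟨j, rfl⟩ := h
  cases j with
  | zero => simp at h1
  | succ k => exact ⟨2^k, by ring⟩

lemma binA_two_mul {a : ℕ} (h : a ∈ binA) : 2 * a ∈ binA := by
  obtain ⟨j, rfl⟩ := h; exact ⟨j+1, by ring⟩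

lemma binA_half {a : ℕ} (h : a ∈ binA) (h1 : a ≠ 1) : a / 2 ∈ binA := by
  obtain ⟨j, rfl⟩ := h
  cases j with
  | zero => simp at h1
  | succ k => exact ⟨k, by rw [pow_succ, Nat.mul_div_cancel _ (by norm_num : (0:ℕ) < 2)]⟩

lemma sum_map_half (s : Multiset ℕ) : (∀ x ∈ s, 2 ∣ x) → 2 * (s.map (· / 2)).sum = s.sum := by
  refine Multiset.induction_on s (by intro _; simp) ?_
  intro a s ih h
  have ha : 2 ∣ a := h a (mem_cons_self a s)
  rw [Multiset.map_cons, Multiset.sum_cons, Multiset.sum_cons, mul_add,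
    ih (fun x hx => h x (mem_cons_of_mem hx)), Nat.mul_div_cancel' ha]

lemma sum_map_double (s : Multiset ℕ) : (s.map (2 * ·)).sum = 2 * s.sum := by
  refine Multiset.induction_on s (by simp) ?_
  intro a s ih
  rw [Multiset.map_cons, Multiset.sum_cons, Multiset.sum_cons, ih, mul_add]

lemma mem_ne_one_dvd {s : Multiset ℕ} (hA : ∀ x ∈ s, x ∈ binA) (h1 : 1 ∉ s) {x : ℕ}
    (hx : x ∈ s) : 2 ∣ x :=
  binA_even (hA x hx) (fun e => h1 (e ▸ hx))

lemma map_double_halve {s : Multiset ℕ} (hA : ∀ x ∈ s, x ∈ binA) (h1 : 1 ∉ s) :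
    (s.map (· / 2)).map (2 * ·) = s := by
  rw [Multiset.map_map]
  have h : ∀ x ∈ s, ((2 * ·) ∘ (· / 2)) x = id x := fun x hx =>
    Nat.mul_div_cancel' (mem_ne_one_dvd hA h1 hx)
  rw [Multiset.map_congr rfl h, Multiset.map_id]

/-- Adding a part equal to 1. -/
def consOne {n : ℕ} (q : n.Partition) : (n+1).Partition where
  parts := 1 ::ₘ q.parts
  parts_pos := fun {i} hi => by
    rcases Multiset.mem_cons.mp hi with rfl | h
    · exact one_pos
    · exact q.parts_pos h
  parts_sum := by rw [Multiset.sum_cons, q.parts_sum, add_comm]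

def eraseOneEquiv (n : ℕ) :
    {p : (n+1).Partition // (∀ x ∈ p.parts, x ∈ binA) ∧ 1 ∈ p.parts} ≃
    {q : n.Partition // ∀ x ∈ q.parts, x ∈ binA} where
  toFun p := ⟨⟨p.1.parts.erase 1,
      fun {i} hi => p.1.parts_pos (Multiset.mem_of_mem_erase hi),
      by
        have h := congrArg Multiset.sum (Multiset.cons_erase p.2.2)
        rw [Multiset.sum_cons, p.1.parts_sum] at h
        omega⟩,
    fun x hx => p.2.1 x (Multiset.mem_of_mem_erase hx)⟩
  invFun q := ⟨consOne q.1, ⟨fun x hx => by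
      rcases Multiset.mem_cons.mp hx with rfl | h
      · exact one_mem_binA
      · exact q.2 x h,
    Multiset.mem_cons_self 1 _⟩⟩
  left_inv p := Subtype.ext (Nat.Partition.ext (Multiset.cons_erase p.2.2))
  right_inv q := Subtype.ext (Nat.Partition.ext (Multiset.erase_cons_head 1 q.1.parts))

/-- Doubling all parts. -/
def doublePartition {m : ℕ} (q : m.Partition) : (2*m).Partition where
  parts := q.parts.map (2 * ·)
  parts_pos := fun {i} hi => by
    obtain ⟨x, hx, rfl⟩ := Multiset.mem_map.mp hi
    have := q.parts_pos hx; omega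
  parts_sum := by rw [sum_map_double, q.parts_sum]

def halveEquiv (m : ℕ) :
    {p : (2*m).Partition // (∀ x ∈ p.parts, x ∈ binA) ∧ 1 ∉ p.parts} ≃
    {q : m.Partition // ∀ x ∈ q.parts, x ∈ binA} where
  toFun p := ⟨⟨p.1.parts.map (· / 2),
      fun {i} hi => by
        obtain ⟨x, hx, rfl⟩ := Multiset.mem_map.mp hi
        have hd : 2 ∣ x := mem_ne_one_dvd p.2.1 p.2.2 hx
        have := p.1.parts_pos hx
        omega,
      by
        have h := sum_map_half p.1.parts (fun x hx => mem_ne_one_dvd p.2.1 p.2.2 hx)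
        rw [p.1.parts_sum] at h
        omega⟩,
    fun x hx => by
      obtain ⟨y, hy, rfl⟩ := Multiset.mem_map.mp hx
      exact binA_half (p.2.1 y hy) (fun e => p.2.2 (e ▸ hy))⟩
  invFun q := ⟨doublePartition q.1,
    ⟨fun x hx => by
        obtain ⟨y, hy, rfl⟩ := Multiset.mem_map.mp hx
        exact binA_two_mul (q.2 y hy),
      fun h1 => by
        obtain ⟨y, hy, he⟩ := Multiset.mem_map.mp h1
        omega⟩⟩
  left_inv p := Subtype.ext (Nat.Partition.ext (map_double_halve p.2.1 p.2.2))
  right_inv q := Subtype.ext (Nat.Partition.ext (by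
    show (q.1.parts.map (2 * ·)).map (· / 2) = q.1.parts
    rw [Multiset.map_map]
    have h : ∀ x ∈ q.1.parts, ((· / 2) ∘ (2 * ·)) x = id x := fun x hx => by
      simp
    rw [Multiset.map_congr rfl h, Multiset.map_id]))

end Aux

namespace Aux2
open Multiset Aux

lemma sum_part_split (n : ℕ) (f : Multiset ℕ → ℕ) :
    (∑ p : n.Partition, if ∀ x ∈ p.parts, x ∈ binA then f p.parts else 0)
      = (∑ p : n.Partition, if (∀ x ∈ p.parts, x ∈ binA) ∧ 1 ∈ p.parts then f p.parts else 0)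
      + (∑ p : n.Partition, if (∀ x ∈ p.parts, x ∈ binA) ∧ 1 ∉ p.parts then f p.parts else 0) := by
  rw [← Finset.sum_add_distrib]
  refine Finset.sum_congr rfl fun p _ => ?_
  by_cases h1 : ∀ x ∈ p.parts, x ∈ binA <;> by_cases h2 : 1 ∈ p.parts <;> simp [h1, h2]

lemma cons_sum (n : ℕ) (f : Multiset ℕ → ℕ) :
    (∑ p : (n+1).Partition, if (∀ x ∈ p.parts, x ∈ binA) ∧ 1 ∈ p.parts then f p.parts else 0)
      = ∑ q : n.Partition, if ∀ x ∈ q.parts, x ∈ binA then f (1 ::ₘ q.parts) else 0 := by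
  have h1 : (∑ p : (n+1).Partition, if (∀ x ∈ p.parts, x ∈ binA) ∧ 1 ∈ p.parts then f p.parts else 0)
      = ∑ p : {p : (n+1).Partition // (∀ x ∈ p.parts, x ∈ binA) ∧ 1 ∈ p.parts}, f p.1.parts := by
    rw [← Finset.sum_filter]
    exact Finset.sum_subtype _ (fun x => by simp) _
  have h2 : (∑ q : n.Partition, if ∀ x ∈ q.parts, x ∈ binA then f (1 ::ₘ q.parts) else 0)
      = ∑ q : {q : n.Partition // ∀ x ∈ q.parts, x ∈ binA}, f (1 ::ₘ q.1.parts) := by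
    rw [← Finset.sum_filter]
    exact Finset.sum_subtype _ (fun x => by simp) _
  rw [h1, h2]
  exact Fintype.sum_equiv (eraseOneEquiv n) _ _
    (fun p => congrArg f (Multiset.cons_erase p.2.2).symm)

lemma double_sum (m : ℕ) (f : Multiset ℕ → ℕ) :
    (∑ p : (2*m).Partition, if (∀ x ∈ p.parts, x ∈ binA) ∧ 1 ∉ p.parts then f p.parts else 0)
      = ∑ q : m.Partition, if ∀ x ∈ q.parts, x ∈ binA then f (q.parts.map (2 * ·)) else 0 := by
  have h1 : (∑ p : (2*m).Partition, if (∀ x ∈ p.parts, x ∈ binA) ∧ 1 ∉ p.parts then f p.parts else 0)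
      = ∑ p : {p : (2*m).Partition // (∀ x ∈ p.parts, x ∈ binA) ∧ 1 ∉ p.parts}, f p.1.parts := by
    rw [← Finset.sum_filter]
    exact Finset.sum_subtype _ (fun x => by simp) _
  have h2 : (∑ q : m.Partition, if ∀ x ∈ q.parts, x ∈ binA then f (q.parts.map (2 * ·)) else 0)
      = ∑ q : {q : m.Partition // ∀ x ∈ q.parts, x ∈ binA}, f (q.1.parts.map (2 * ·)) := by
    rw [← Finset.sum_filter]
    exact Finset.sum_subtype _ (fun x => by simp) _
  rw [h1, h2]
  exact Fintype.sum_equiv (halveEquiv m) _ _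
    (fun p => congrArg f (map_double_halve p.2.1 p.2.2).symm)

lemma odd_no_one (n : ℕ) (hn : ¬ 2 ∣ n) (f : Multiset ℕ → ℕ) :
    (∑ p : n.Partition, if (∀ x ∈ p.parts, x ∈ binA) ∧ 1 ∉ p.parts then f p.parts else 0) = 0 := by
  apply Finset.sum_eq_zero
  intro p _
  rw [if_neg]
  rintro ⟨hA, h1⟩
  apply hn
  have h := sum_map_half p.parts (fun x hx => mem_ne_one_dvd hA h1 hx)
  rw [p.parts_sum] at h
  exact ⟨_, h.symm⟩

lemma pA_zero : pA binA 0 = 1 := by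
  show (∑ p : Nat.Partition 0, if ∀ x ∈ p.parts, x ∈ binA then 1 else 0) = 1
  rw [Fintype.sum_unique]
  rw [if_pos]
  intro x hx
  simp at hx

lemma NpA_zero : NpA binA 0 = 0 := by
  show (∑ p : Nat.Partition 0, if ∀ x ∈ p.parts, x ∈ binA then p.parts.card else 0) = 0
  rw [Fintype.sum_unique]
  simp

lemma pA_odd (t : ℕ) : pA binA (2*t+1) = pA binA (2*t) := by
  have h1 : pA binA (2*t+1)
      = (∑ p : (2*t+1).Partition, if (∀ x ∈ p.parts, x ∈ binA) ∧ 1 ∈ p.parts then 1 else 0)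
      + (∑ p : (2*t+1).Partition, if (∀ x ∈ p.parts, x ∈ binA) ∧ 1 ∉ p.parts then 1 else 0) :=
    sum_part_split (2*t+1) (fun _ => 1)
  have h2 : (∑ p : (2*t+1).Partition, if (∀ x ∈ p.parts, x ∈ binA) ∧ 1 ∈ p.parts then 1 else 0)
      = pA binA (2*t) := cons_sum (2*t) (fun _ => 1)
  have h3 : (∑ p : (2*t+1).Partition, if (∀ x ∈ p.parts, x ∈ binA) ∧ 1 ∉ p.parts then 1 else 0)
      = 0 := odd_no_one (2*t+1) (by omega) (fun _ => 1)
  omega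

lemma pA_even (t : ℕ) : pA binA (2*t+2) = pA binA (2*t) + pA binA (t+1) := by
  have h1 : pA binA (2*t+2)
      = (∑ p : (2*t+2).Partition, if (∀ x ∈ p.parts, x ∈ binA) ∧ 1 ∈ p.parts then 1 else 0)
      + (∑ p : (2*t+2).Partition, if (∀ x ∈ p.parts, x ∈ binA) ∧ 1 ∉ p.parts then 1 else 0) :=
    sum_part_split (2*t+2) (fun _ => 1)
  have h2 : (∑ p : (2*t+2).Partition, if (∀ x ∈ p.parts, x ∈ binA) ∧ 1 ∈ p.parts then 1 else 0)
      = pA binA (2*t+1) := cons_sum (2*t+1) (fun _ => 1)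
  have h3 : (∑ p : (2*t+2).Partition, if (∀ x ∈ p.parts, x ∈ binA) ∧ 1 ∉ p.parts then 1 else 0)
      = pA binA (t+1) := double_sum (t+1) (fun _ => 1)
  have h4 := pA_odd t
  omega

lemma NpA_odd (t : ℕ) : NpA binA (2*t+1) = NpA binA (2*t) + pA binA (2*t) := by
  have h1 : NpA binA (2*t+1)
      = (∑ p : (2*t+1).Partition,
          if (∀ x ∈ p.parts, x ∈ binA) ∧ 1 ∈ p.parts then p.parts.card else 0)
      + (∑ p : (2*t+1).Partition,
          if (∀ x ∈ p.parts, x ∈ binA) ∧ 1 ∉ p.parts then p.parts.card else 0) :=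
    sum_part_split (2*t+1) Multiset.card
  have h2 : (∑ p : (2*t+1).Partition,
          if (∀ x ∈ p.parts, x ∈ binA) ∧ 1 ∈ p.parts then p.parts.card else 0)
      = ∑ q : (2*t).Partition,
          if ∀ x ∈ q.parts, x ∈ binA then (1 ::ₘ q.parts).card else 0 :=
    cons_sum (2*t) Multiset.card
  have h2' : (∑ q : (2*t).Partition,
          if ∀ x ∈ q.parts, x ∈ binA then (1 ::ₘ q.parts).card else 0)
      = NpA binA (2*t) + pA binA (2*t) := by
    have : ∀ q : (2*t).Partition,
        (if ∀ x ∈ q.parts, x ∈ binA then (1 ::ₘ q.parts).card else 0)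
        = (if ∀ x ∈ q.parts, x ∈ binA then q.parts.card else 0)
          + (if ∀ x ∈ q.parts, x ∈ binA then 1 else 0) := by
      intro q
      by_cases h : ∀ x ∈ q.parts, x ∈ binA
      · rw [if_pos h, if_pos h, if_pos h, Multiset.card_cons]
      · rw [if_neg h, if_neg h, if_neg h]
    rw [Finset.sum_congr rfl (fun q _ => this q), Finset.sum_add_distrib]
    rfl
  have h3 : (∑ p : (2*t+1).Partition,
          if (∀ x ∈ p.parts, x ∈ binA) ∧ 1 ∉ p.parts then p.parts.card else 0)
      = 0 := odd_no_one (2*t+1) (by omega) Multiset.card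
  omega

lemma NpA_even (t : ℕ) :
    NpA binA (2*t+2) = NpA binA (2*t) + 2 * pA binA (2*t) + NpA binA (t+1) := by
  have h1 : NpA binA (2*t+2)
      = (∑ p : (2*t+2).Partition,
          if (∀ x ∈ p.parts, x ∈ binA) ∧ 1 ∈ p.parts then p.parts.card else 0)
      + (∑ p : (2*t+2).Partition,
          if (∀ x ∈ p.parts, x ∈ binA) ∧ 1 ∉ p.parts then p.parts.card else 0) :=
    sum_part_split (2*t+2) Multiset.card
  have h2 : (∑ p : (2*t+2).Partition,
          if (∀ x ∈ p.parts, x ∈ binA) ∧ 1 ∈ p.parts then p.parts.card else 0)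
      = ∑ q : (2*t+1).Partition,
          if ∀ x ∈ q.parts, x ∈ binA then (1 ::ₘ q.parts).card else 0 :=
    cons_sum (2*t+1) Multiset.card
  have h2' : (∑ q : (2*t+1).Partition,
          if ∀ x ∈ q.parts, x ∈ binA then (1 ::ₘ q.parts).card else 0)
      = NpA binA (2*t+1) + pA binA (2*t+1) := by
    have : ∀ q : (2*t+1).Partition,
        (if ∀ x ∈ q.parts, x ∈ binA then (1 ::ₘ q.parts).card else 0)
        = (if ∀ x ∈ q.parts, x ∈ binA then q.parts.card else 0)
          + (if ∀ x ∈ q.parts, x ∈ binA then 1 else 0) := by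
      intro q
      by_cases h : ∀ x ∈ q.parts, x ∈ binA
      · rw [if_pos h, if_pos h, if_pos h, Multiset.card_cons]
      · rw [if_neg h, if_neg h, if_neg h]
    rw [Finset.sum_congr rfl (fun q _ => this q), Finset.sum_add_distrib]
    rfl
  have h3 : (∑ p : (2*t+2).Partition,
          if (∀ x ∈ p.parts, x ∈ binA) ∧ 1 ∉ p.parts then p.parts.card else 0)
      = ∑ q : (t+1).Partition,
          if ∀ x ∈ q.parts, x ∈ binA then (q.parts.map (2 * ·)).card else 0 :=
    double_sum (t+1) Multiset.card
  have h3' : (∑ q : (t+1).Partition,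
          if ∀ x ∈ q.parts, x ∈ binA then (q.parts.map (2 * ·)).card else 0)
      = NpA binA (t+1) := by
    refine Finset.sum_congr rfl fun q _ => ?_
    rw [Multiset.card_map]
  have h4 := NpA_odd t
  have h5 := pA_odd t
  omega

end Aux2

namespace Aux3
open Aux Aux2

lemma hw_zero : hw 0 = 0 := by simp [hw]

lemma hw_two_mul (m : ℕ) : hw (2*m) = hw m := by
  rcases Nat.eq_zero_or_pos m with rfl | hm
  · simp
  · unfold hw
    rw [Nat.digits_def' (by norm_num : 1 < 2) (by omega : 0 < 2*m)]
    rw [Nat.mul_mod_right, Nat.mul_div_cancel_left _ (by norm_num : 0 < 2)]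
    simp

lemma hw_two_mul_add_one (m : ℕ) : hw (2*m+1) = hw m + 1 := by
  unfold hw
  rw [Nat.digits_def' (by norm_num : 1 < 2) (by omega : 0 < 2*m+1)]
  have h1 : (2*m+1) % 2 = 1 := by omega
  have h2 : (2*m+1) / 2 = m := by omega
  rw [h1, h2]
  simp [add_comm]

/-- The sign `s`. -/
noncomputable def sg (m : ℕ) : ℤ := if m = 0 then 1 else (-1 : ℤ) ^ hw (m)

lemma sg_eq (m : ℕ) : sg m = (-1 : ℤ) ^ hw m := by
  unfold sg
  split
  · subst ‹m = 0›; rw [hw_zero]; rfl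
  · rfl

lemma sg_zero : sg 0 = 1 := rfl

lemma sg_two_mul (m : ℕ) : sg (2*m) = sg m := by
  rw [sg_eq, sg_eq, hw_two_mul]

lemma sg_two_mul_add_one (m : ℕ) : sg (2*m+1) = - sg m := by
  rw [sg_eq, sg_eq, hw_two_mul_add_one, pow_succ]
  ring

/-- `pA binA` as an integer. -/
noncomputable def pz (n : ℕ) : ℤ := (pA binA n : ℤ)
/-- `NpA binA` as an integer. -/
noncomputable def Nz (n : ℕ) : ℤ := (NpA binA n : ℤ)

lemma pz_zero : pz 0 = 1 := by unfold pz; rw [pA_zero]; rfl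
lemma Nz_zero : Nz 0 = 0 := by unfold Nz; rw [NpA_zero]; rfl
lemma pz_odd (t : ℕ) : pz (2*t+1) = pz (2*t) := by unfold pz; exact_mod_cast pA_odd t
lemma pz_even (t : ℕ) : pz (2*t+2) = pz (2*t) + pz (t+1) := by
  unfold pz; rw [pA_even t]; push_cast; ring
lemma Nz_odd (t : ℕ) : Nz (2*t+1) = Nz (2*t) + pz (2*t) := by
  unfold Nz pz; rw [NpA_odd t]; push_cast; ring
lemma Nz_even (t : ℕ) : Nz (2*t+2) = Nz (2*t) + 2 * pz (2*t) + Nz (t+1) := by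
  unfold Nz pz; rw [NpA_even t]; push_cast; ring

lemma sum_range_even (f : ℕ → ℤ) (t : ℕ) :
    ∑ k ∈ Finset.range (2*t), f k = ∑ i ∈ Finset.range t, (f (2*i) + f (2*i+1)) := by
  induction t with
  | zero => simp
  | succ t ih =>
    have e : 2*(t+1) = (2*t+1)+1 := by ring
    rw [e, Finset.sum_range_succ, Finset.sum_range_succ, Finset.sum_range_succ, ih]
    ring

/-- `F n = Σ_{k=0}^n p(k) s(n-k)`. -/
noncomputable def Fz (n : ℕ) : ℤ := ∑ k ∈ Finset.range (n+1), pz k * sg (n - k)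
/-- `U t = Σ_{i=0}^t p(2i) s(t-i)`. -/
noncomputable def Uz (t : ℕ) : ℤ := ∑ i ∈ Finset.range (t+1), pz (2*i) * sg (t - i)
/-- `V t = Σ_{i=0}^t N(2i) s(t-i)`. -/
noncomputable def Vz (t : ℕ) : ℤ := ∑ i ∈ Finset.range (t+1), Nz (2*i) * sg (t - i)
/-- `G n = Σ_{k=0}^n N(k) s(n-k)`. -/
noncomputable def Gz (n : ℕ) : ℤ := ∑ k ∈ Finset.range (n+1), Nz k * sg (n - k)

lemma Fz_zero : Fz 0 = 1 := by
  unfold Fz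
  rw [Finset.sum_range_one]
  simp [pz_zero, sg_zero]

lemma Fz_odd (t : ℕ) : Fz (2*t+1) = 0 := by
  unfold Fz
  have e : 2*t+1+1 = 2*(t+1) := by ring
  rw [e, sum_range_even]
  apply Finset.sum_eq_zero
  intro i hi
  have hit : i ≤ t := by simpa using Nat.lt_succ_iff.mp (Finset.mem_range.mp hi)
  have e1 : 2*t+1 - 2*i = 2*(t-i)+1 := by omega
  have e2 : 2*t+1 - (2*i+1) = 2*(t-i) := by omega
  rw [e1, e2, sg_two_mul_add_one, sg_two_mul, pz_odd]
  ring

lemma Uz_succ (t : ℕ) : Uz (t+1) = Uz t + Fz (t+1) := by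
  unfold Uz Fz
  rw [Finset.sum_range_succ' (fun i => pz (2*i) * sg (t+1 - i)) (t+1)]
  rw [Finset.sum_range_succ' (fun k => pz k * sg (t+1 - k)) (t+1)]
  have e0 : ∀ i : ℕ, t + 1 - (i+1) = t - i := fun i => by omega
  have step : ∀ i ∈ Finset.range (t+1),
      pz (2*(i+1)) * sg (t+1 - (i+1))
        = pz (2*i) * sg (t - i) + pz (i+1) * sg (t+1 - (i+1)) := by
    intro i _
    have e : 2*(i+1) = 2*i+2 := by ring
    rw [e, pz_even, e0 i]
    ring
  rw [Finset.sum_congr rfl step, Finset.sum_add_distrib]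
  rw [pz_zero]
  push_cast
  ring

lemma Fz_even (t : ℕ) : Fz (2*t+2) = Fz (t+1) := by
  have key : Fz (2*t+2) = Uz (t+1) - Uz t := by
    unfold Fz
    have e : 2*t+2+1 = 2*(t+1)+1 := by ring
    rw [e, Finset.sum_range_succ, sum_range_even]
    have step : ∀ i ∈ Finset.range (t+1),
        pz (2*i) * sg (2*t+2 - 2*i) + pz (2*i+1) * sg (2*t+2 - (2*i+1))
          = pz (2*i) * sg (t+1-i) - pz (2*i) * sg (t-i) := by
      intro i hi
      have hit : i ≤ t := by simpa using Nat.lt_succ_iff.mp (Finset.mem_range.mp hi)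
      have e1 : 2*t+2 - 2*i = 2*(t+1-i) := by omega
      have e2 : 2*t+2 - (2*i+1) = 2*(t-i)+1 := by omega
      rw [e1, e2, sg_two_mul, sg_two_mul_add_one, pz_odd]
      ring
    rw [Finset.sum_congr rfl step, Finset.sum_sub_distrib]
    have eU : Uz (t+1) = (∑ i ∈ Finset.range (t+1), pz (2*i) * sg (t+1-i)) + pz (2*(t+1)) * sg 0 := by
      unfold Uz
      rw [Finset.sum_range_succ]
      simp
    have e3 : 2*t+2 - 2*(t+1) = 0 := by omega
    rw [e3, eU]
    unfold Uz
    have e4 : 2*(t+1) = 2*t+2 := by ring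
    rw [e4]
    ring
  rw [key, Uz_succ]
  ring

lemma Fz_pos (n : ℕ) (hn : 1 ≤ n) : Fz n = 0 := by
  induction n using Nat.strong_induction_on with
  | _ n ih =>
    rcases Nat.even_or_odd n with he | ho
    · obtain ⟨t, rfl⟩ := he
      have ht : 1 ≤ t := by omega
      obtain ⟨s, rfl⟩ : ∃ s, t = s + 1 := ⟨t - 1, by omega⟩
      have e : s + 1 + (s + 1) = 2*s+2 := by ring
      rw [e, Fz_even]
      exact ih (s+1) (by omega) (by omega)
    · obtain ⟨t, rfl⟩ := ho
      exact Fz_odd t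
lemma Uz_one (t : ℕ) : Uz t = 1 := by
  induction t with
  | zero =>
    unfold Uz
    rw [Finset.sum_range_one]
    simp [pz_zero, sg_zero]
  | succ t ih => rw [Uz_succ, ih, Fz_pos (t+1) (by omega)]; ring

lemma Gz_odd (t : ℕ) : Gz (2*t+1) = 1 := by
  unfold Gz
  have e : 2*t+1+1 = 2*(t+1) := by ring
  rw [e, sum_range_even]
  have step : ∀ i ∈ Finset.range (t+1),
      Nz (2*i) * sg (2*t+1 - 2*i) + Nz (2*i+1) * sg (2*t+1 - (2*i+1))
        = pz (2*i) * sg (t-i) := by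
    intro i hi
    have hit : i ≤ t := by simpa using Nat.lt_succ_iff.mp (Finset.mem_range.mp hi)
    have e1 : 2*t+1 - 2*i = 2*(t-i)+1 := by omega
    have e2 : 2*t+1 - (2*i+1) = 2*(t-i) := by omega
    rw [e1, e2, sg_two_mul, sg_two_mul_add_one, Nz_odd]
    ring
  rw [Finset.sum_congr rfl step]
  exact Uz_one t

lemma Vz_succ (t : ℕ) : Vz (t+1) = Vz t + 2 * Uz t + (Gz (t+1) - Nz 0 * sg (t+1)) := by
  unfold Vz Gz
  rw [Finset.sum_range_succ' (fun i => Nz (2*i) * sg (t+1 - i)) (t+1)]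
  rw [Finset.sum_range_succ' (fun k => Nz k * sg (t+1 - k)) (t+1)]
  have step : ∀ i ∈ Finset.range (t+1),
      Nz (2*(i+1)) * sg (t+1 - (i+1))
        = Nz (2*i) * sg (t-i) + 2 * (pz (2*i) * sg (t-i)) + Nz (i+1) * sg (t+1 - (i+1)) := by
    intro i _
    have e : 2*(i+1) = 2*i+2 := by ring
    have e0 : t + 1 - (i+1) = t - i := by omega
    rw [e, Nz_even, e0]
    ring
  rw [Finset.sum_congr rfl step, Finset.sum_add_distrib, Finset.sum_add_distrib,
    ← Finset.mul_sum]
  unfold Uz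
  simp only [mul_zero, Nz_zero, Nat.sub_zero, zero_mul]
  ring

lemma Gz_even (t : ℕ) : Gz (2*t+2) = Gz (t+1) + 1 := by
  have key : Gz (2*t+2) = Vz (t+1) - Vz t - Uz t := by
    unfold Gz
    have e : 2*t+2+1 = 2*(t+1)+1 := by ring
    rw [e, Finset.sum_range_succ, sum_range_even]
    have step : ∀ i ∈ Finset.range (t+1),
        Nz (2*i) * sg (2*t+2 - 2*i) + Nz (2*i+1) * sg (2*t+2 - (2*i+1))
          = Nz (2*i) * sg (t+1-i) - (Nz (2*i) * sg (t-i) + pz (2*i) * sg (t-i)) := by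
      intro i hi
      have hit : i ≤ t := by simpa using Nat.lt_succ_iff.mp (Finset.mem_range.mp hi)
      have e1 : 2*t+2 - 2*i = 2*(t+1-i) := by omega
      have e2 : 2*t+2 - (2*i+1) = 2*(t-i)+1 := by omega
      rw [e1, e2, sg_two_mul, sg_two_mul_add_one, Nz_odd]
      ring
    rw [Finset.sum_congr rfl step, Finset.sum_sub_distrib, Finset.sum_add_distrib]
    have eV : Vz (t+1)
        = (∑ i ∈ Finset.range (t+1), Nz (2*i) * sg (t+1-i)) + Nz (2*(t+1)) * sg 0 := by
      unfold Vz
      rw [Finset.sum_range_succ]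
      simp
    have e3 : 2*t+2 - 2*(t+1) = 0 := by omega
    rw [e3, eV]
    unfold Vz Uz
    ring
  rw [key, Vz_succ, Uz_one, Nz_zero]
  ring

lemma Gz_val (n : ℕ) (hn : 1 ≤ n) : Gz n = (padicValNat 2 n : ℤ) + 1 := by
  induction n using Nat.strong_induction_on with
  | _ n ih =>
    rcases Nat.even_or_odd n with he | ho
    · obtain ⟨t, rfl⟩ := he
      obtain ⟨s, rfl⟩ : ∃ s, t = s + 1 := ⟨t-1, by omega⟩
      have e : (s+1) + (s+1) = 2*s+2 := by ring
      rw [e, Gz_even, ih (s+1) (by omega) (by omega)]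
      have hv : padicValNat 2 (2*s+2) = padicValNat 2 (s+1) + 1 := by
        have e2 : 2*s+2 = 2 * (s+1) := by ring
        rw [e2]
        haveI : Fact (Nat.Prime 2) := ⟨Nat.prime_two⟩
        rw [padicValNat.mul (by norm_num) (by omega), padicValNat.self (by norm_num)]
        omega
      rw [hv]
      push_cast
      ring
    · obtain ⟨t, rfl⟩ := ho
      rw [Gz_odd]
      have hv : padicValNat 2 (2*t+1) = 0 := padicValNat.eq_zero_of_not_dvd (by omega)
      rw [hv]
      simp

end Aux3


theorem stmt12 (n : ℕ) (hn : 0 < n) :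
    ∑ k ∈ Finset.Icc 1 n,
        (NpA binA k : ℤ) * (if n - k = 0 then 1 else (-1 : ℤ) ^ hw (n - k)) =
      (padicValNat 2 n : ℤ) + 1 := by
  have key : (∑ k ∈ Finset.Icc 1 n,
      (NpA binA k : ℤ) * (if n - k = 0 then 1 else (-1 : ℤ) ^ hw (n - k))) = Aux3.Gz n := by
    unfold Aux3.Gz
    rw [Finset.sum_range_succ' (fun k => Aux3.Nz k * Aux3.sg (n - k)) n]
    rw [Aux3.Nz_zero]
    rw [← Finset.Ico_add_one_right_eq_Icc, Finset.sum_Ico_eq_sum_range]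
    have e2 : n + 1 - 1 = n := by omega
    rw [e2]
    simp only [zero_mul, add_zero]
    refine Finset.sum_congr rfl fun i hi => ?_
    have e3 : 1 + i = i + 1 := by omega
    rw [e3]
    rfl
  rw [key]
  exact Aux3.Gz_val n hn
end

section
/- For every positive integer n, n · N^p_A(n) = Σ_{k=1}^{n−1} N^p_A(k) · σ_A(n−k) + Σ_{t=1}^{n} t · τ_A(t) · p_A(n−t), where N^p_A(k) is the total number of parts over partitions of k with parts from A, σ_A(m) = Σ_{a∈A, a∣m} a, τ_A(m) = Σ_{a∈A, a∣m} 1, and p_A(m) is the number of partitions of m into parts from A with p_A(0)=1. -/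
open scoped Classical
open Finset

section Aux

lemma sum_ite_one' {α : Type*} [Fintype α] (c : α → Prop) [DecidablePred c] :
    (∑ p : α, if c p then 1 else 0) = (Finset.univ.filter c).card := by
  rw [Finset.card_filter]

lemma keyK (A : Set ℕ) (a j n : ℕ) (ha : a ∈ A) (hapos : 0 < a) :
    (∑ p : n.Partition, if (∀ x ∈ p.parts, x ∈ A) ∧ j ≤ p.parts.count a then 1 else 0) =
    if j * a ≤ n then pA A (n - j * a) else 0 := by
  split_ifs with hle
  · rw [pA, sum_ite_one', sum_ite_one']
    refine Finset.card_bij' (i := fun p hp => ?_) (j := fun q hq => ?_) ?_ ?_ ?_ ?_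
    · -- forward partition
      have hc : (∀ x ∈ p.parts, x ∈ A) ∧ j ≤ p.parts.count a := by
        simpa using hp
      have hrep : Multiset.replicate j a ≤ p.parts :=
        Multiset.le_count_iff_replicate_le.mp hc.2
      exact ⟨p.parts - Multiset.replicate j a,
        fun {x} hx => p.parts_pos (Multiset.mem_of_le (Multiset.sub_le_self _ _) hx),
        by
          have : (p.parts - Multiset.replicate j a) + Multiset.replicate j a = p.parts :=
            tsub_add_cancel_of_le hrep
          have hs := congrArg Multiset.sum this
          rw [Multiset.sum_add, Multiset.sum_replicate, smul_eq_mul, p.parts_sum] at hs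
          omega⟩
    · -- backward partition
      exact ⟨q.parts + Multiset.replicate j a,
        fun {x} hx => by
          rcases Multiset.mem_add.mp hx with h | h
          · exact q.parts_pos h
          · rw [Multiset.eq_of_mem_replicate h]; exact hapos,
        by rw [Multiset.sum_add, Multiset.sum_replicate, smul_eq_mul, q.parts_sum]; omega⟩
    · intro p hp
      simp only [Finset.mem_filter, Finset.mem_univ, true_and] at hp ⊢
      intro x hx
      exact hp.1 x (Multiset.mem_of_le (Multiset.sub_le_self _ _) hx)
    · intro q hq
      simp only [Finset.mem_filter, Finset.mem_univ, true_and] at hq ⊢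
      constructor
      · intro x hx
        rcases Multiset.mem_add.mp hx with h | h
        · exact hq x h
        · rwa [Multiset.eq_of_mem_replicate h]
      · rw [Multiset.count_add, Multiset.count_replicate_self]; omega
    · intro p hp
      apply Nat.Partition.ext
      simp only
      have hc : (∀ x ∈ p.parts, x ∈ A) ∧ j ≤ p.parts.count a := by simpa using hp
      exact tsub_add_cancel_of_le (Multiset.le_count_iff_replicate_le.mp hc.2)
    · intro q hq
      apply Nat.Partition.ext
      simp only
      exact add_tsub_cancel_right _ _
  · refine Finset.sum_eq_zero fun p _ => ?_
    rw [if_neg]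
    rintro ⟨-, hcnt⟩
    have hrep : Multiset.replicate j a ≤ p.parts := Multiset.le_count_iff_replicate_le.mp hcnt
    have h1 : (Multiset.replicate j a).sum ≤ p.parts.sum := by
      have : (p.parts - Multiset.replicate j a) + Multiset.replicate j a = p.parts :=
        tsub_add_cancel_of_le hrep
      have hs := congrArg Multiset.sum this
      rw [Multiset.sum_add] at hs
      omega
    rw [Multiset.sum_replicate, smul_eq_mul, p.parts_sum] at h1
    omega

lemma parts_card_le {n : ℕ} (p : n.Partition) : Multiset.card p.parts ≤ n := by
  have h := Multiset.card_nsmul_le_sum (s := p.parts) (a := 1)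
    (fun x hx => p.parts_pos hx)
  simpa [p.parts_sum] using h

lemma parts_toFinset_subset {n : ℕ} (p : n.Partition) :
    p.parts.toFinset ⊆ Finset.Icc 1 n := by
  intro a ha
  rw [Multiset.mem_toFinset] at ha
  rw [Finset.mem_Icc]
  refine ⟨p.parts_pos ha, ?_⟩
  have := Multiset.single_le_sum (fun x _ => Nat.zero_le x) a ha
  rwa [p.parts_sum] at this

lemma sum_indicator_le (n m : ℕ) (h : m ≤ n) :
    (∑ j ∈ Finset.Icc 1 n, if j ≤ m then (1 : ℕ) else 0) = m := by
  rw [Finset.sum_ite, Finset.sum_const, Finset.sum_const_zero, add_zero, smul_eq_mul, mul_one]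
  have : (Finset.Icc 1 n).filter (fun j => j ≤ m) = Finset.Icc 1 m := by
    ext j; simp only [Finset.mem_filter, Finset.mem_Icc]; omega
  rw [this, Nat.card_Icc]
  omega

lemma keyG (A : Set ℕ) (hA : ∀ a ∈ A, 0 < a) (w : ℕ → ℕ) (n : ℕ) :
    (∑ p : n.Partition, if (∀ x ∈ p.parts, x ∈ A)
        then ∑ a ∈ Finset.Icc 1 n, w a * p.parts.count a else 0) =
    ∑ t ∈ Finset.Icc 1 n, (∑ a ∈ t.divisors.filter (· ∈ A), w a) * pA A (n - t) := by
  have step1 : (∑ p : n.Partition, if (∀ x ∈ p.parts, x ∈ A)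
        then ∑ a ∈ Finset.Icc 1 n, w a * p.parts.count a else 0) =
      ∑ a ∈ Finset.Icc 1 n, ∑ j ∈ Finset.Icc 1 n,
        (if a ∈ A ∧ j * a ≤ n then w a * pA A (n - j * a) else 0) := by
    have h1 : ∀ p : n.Partition,
        (if (∀ x ∈ p.parts, x ∈ A) then ∑ a ∈ Finset.Icc 1 n, w a * p.parts.count a else 0) =
        ∑ a ∈ Finset.Icc 1 n, ∑ j ∈ Finset.Icc 1 n,
          (if (∀ x ∈ p.parts, x ∈ A) ∧ j ≤ p.parts.count a then w a else 0) := by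
      intro p
      split_ifs with hc
      · refine Finset.sum_congr rfl fun a ha => ?_
        have hcnt : p.parts.count a ≤ n :=
          le_trans (Multiset.count_le_card a p.parts) (parts_card_le p)
        calc w a * p.parts.count a
            = w a * ∑ j ∈ Finset.Icc 1 n, (if j ≤ p.parts.count a then (1:ℕ) else 0) := by
              rw [sum_indicator_le n _ hcnt]
          _ = ∑ j ∈ Finset.Icc 1 n, (if (∀ x ∈ p.parts, x ∈ A) ∧ j ≤ p.parts.count a
                then w a else 0) := by
              rw [Finset.mul_sum]
              refine Finset.sum_congr rfl fun j _ => ?_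
              rw [mul_ite, mul_one, mul_zero]
              exact if_congr (and_iff_right hc).symm rfl rfl
      · symm
        refine Finset.sum_eq_zero fun a _ => Finset.sum_eq_zero fun j _ => ?_
        simp [hc]
    calc (∑ p : n.Partition, if (∀ x ∈ p.parts, x ∈ A)
        then ∑ a ∈ Finset.Icc 1 n, w a * p.parts.count a else 0)
        = ∑ p : n.Partition, ∑ a ∈ Finset.Icc 1 n, ∑ j ∈ Finset.Icc 1 n,
            (if (∀ x ∈ p.parts, x ∈ A) ∧ j ≤ p.parts.count a then w a else 0) :=
          Finset.sum_congr rfl fun p _ => h1 p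
      _ = ∑ a ∈ Finset.Icc 1 n, ∑ p : n.Partition, ∑ j ∈ Finset.Icc 1 n,
            (if (∀ x ∈ p.parts, x ∈ A) ∧ j ≤ p.parts.count a then w a else 0) :=
          Finset.sum_comm
      _ = ∑ a ∈ Finset.Icc 1 n, ∑ j ∈ Finset.Icc 1 n, ∑ p : n.Partition,
            (if (∀ x ∈ p.parts, x ∈ A) ∧ j ≤ p.parts.count a then w a else 0) :=
          Finset.sum_congr rfl fun a _ => Finset.sum_comm
      _ = ∑ a ∈ Finset.Icc 1 n, ∑ j ∈ Finset.Icc 1 n,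
            (if a ∈ A ∧ j * a ≤ n then w a * pA A (n - j * a) else 0) := by
          refine Finset.sum_congr rfl fun a ha => Finset.sum_congr rfl fun j hj => ?_
          rw [Finset.mem_Icc] at ha hj
          by_cases hmem : a ∈ A
          · have := keyK A a j n hmem (hA a hmem)
            calc (∑ p : n.Partition,
                  if (∀ x ∈ p.parts, x ∈ A) ∧ j ≤ p.parts.count a then w a else 0)
                = w a * ∑ p : n.Partition,
                  (if (∀ x ∈ p.parts, x ∈ A) ∧ j ≤ p.parts.count a then 1 else 0) := by
                  rw [Finset.mul_sum]
                  refine Finset.sum_congr rfl fun p _ => ?_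
                  split_ifs <;> simp
              _ = if a ∈ A ∧ j * a ≤ n then w a * pA A (n - j * a) else 0 := by
                  rw [this]
                  split_ifs with h2 h3 h3 <;> simp_all
          · rw [if_neg (by tauto)]
            refine Finset.sum_eq_zero fun p _ => ?_
            rw [if_neg]
            rintro ⟨hall, hcnt⟩
            have : a ∈ p.parts := Multiset.count_pos.mp (by omega)
            exact hmem (hall a this)
  rw [step1]
  -- now reindex the divisor sum
  have step2 : (∑ t ∈ Finset.Icc 1 n, (∑ a ∈ t.divisors.filter (· ∈ A), w a) * pA A (n - t)) =
      ∑ x ∈ (Finset.Icc 1 n).sigma (fun t => t.divisors.filter (· ∈ A)),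
        w x.2 * pA A (n - x.1) := by
    rw [Finset.sum_sigma]
    refine Finset.sum_congr rfl fun t _ => ?_
    rw [Finset.sum_mul]
  rw [step2]
  rw [← Finset.sum_product']
  rw [show (∑ x ∈ Finset.Icc 1 n ×ˢ Finset.Icc 1 n,
      if x.1 ∈ A ∧ x.2 * x.1 ≤ n then w x.1 * pA A (n - x.2 * x.1) else 0) =
      ∑ x ∈ (Finset.Icc 1 n ×ˢ Finset.Icc 1 n).filter
        (fun x => x.1 ∈ A ∧ x.2 * x.1 ≤ n), w x.1 * pA A (n - x.2 * x.1) from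
      (Finset.sum_filter _ _).symm]
  refine (Finset.sum_nbij' (i := fun x => (x.2, x.1 / x.2))
    (j := fun y => (⟨y.2 * y.1, y.1⟩ : Σ _ : ℕ, ℕ)) ?_ ?_ ?_ ?_ ?_).symm
  · rintro ⟨t, a⟩ hx
    simp only [Finset.mem_sigma, Finset.mem_filter, Nat.mem_divisors, Finset.mem_Icc] at hx
    obtain ⟨⟨ht1, ht2⟩, ⟨hdvd, htne⟩, haA⟩ := hx
    have hapos : 0 < a := Nat.pos_of_dvd_of_pos hdvd (by omega)
    have hta := Nat.le_of_dvd (by omega) hdvd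
    simp only [Finset.mem_filter, Finset.mem_product, Finset.mem_Icc]
    refine ⟨⟨⟨hapos, by omega⟩, ?_, ?_⟩, haA, ?_⟩
    · exact Nat.div_pos hta hapos
    · exact le_trans (Nat.div_le_self _ _) (by omega)
    · rw [Nat.div_mul_cancel hdvd]; omega
  · rintro ⟨a, jj⟩ hy
    simp only [Finset.mem_filter, Finset.mem_product, Finset.mem_Icc] at hy
    obtain ⟨⟨⟨ha1, ha2⟩, hj1, hj2⟩, haA, hle⟩ := hy
    simp only [Finset.mem_sigma, Finset.mem_filter, Nat.mem_divisors, Finset.mem_Icc]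
    have hpos : 0 < jj * a := Nat.mul_pos (by omega) (by omega)
    exact ⟨⟨hpos, hle⟩, ⟨dvd_mul_left a jj, hpos.ne'⟩, haA⟩
  · rintro ⟨t, a⟩ hx
    simp only [Finset.mem_sigma, Finset.mem_filter, Nat.mem_divisors, Finset.mem_Icc] at hx
    obtain ⟨⟨ht1, ht2⟩, ⟨hdvd, htne⟩, haA⟩ := hx
    dsimp only
    rw [Nat.div_mul_cancel hdvd]
  · rintro ⟨a, jj⟩ hy
    simp only [Finset.mem_filter, Finset.mem_product, Finset.mem_Icc] at hy
    obtain ⟨⟨⟨ha1, ha2⟩, hj1, hj2⟩, haA, hle⟩ := hy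
    dsimp only
    rw [Nat.mul_div_cancel jj (show 0 < a by omega)]
  · rintro ⟨t, a⟩ hx
    simp only [Finset.mem_sigma, Finset.mem_filter, Nat.mem_divisors, Finset.mem_Icc] at hx
    obtain ⟨⟨ht1, ht2⟩, ⟨hdvd, htne⟩, haA⟩ := hx
    simp only
    rw [Nat.div_mul_cancel hdvd]

lemma L1 (A : Set ℕ) (hA : ∀ a ∈ A, 0 < a) (n : ℕ) :
    NpA A n = ∑ t ∈ Finset.Icc 1 n, tauA A t * pA A (n - t) := by
  have h := keyG A hA (fun _ => 1) n
  have hl : (∑ p : n.Partition, if (∀ x ∈ p.parts, x ∈ A)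
        then ∑ a ∈ Finset.Icc 1 n, (fun _ => 1) a * p.parts.count a else 0) = NpA A n := by
    rw [NpA]
    refine Finset.sum_congr rfl fun p _ => ?_
    split_ifs with hc
    · simp only [one_mul]
      rw [← Multiset.toFinset_sum_count_eq]
      exact (Finset.sum_subset (parts_toFinset_subset p) (fun x _ hx => by
        rwa [Multiset.count_eq_zero, ← Multiset.mem_toFinset])).symm
    · rfl
  rw [← hl, h]
  refine Finset.sum_congr rfl fun t _ => ?_
  rw [tauA, Finset.card_eq_sum_ones]

lemma L2 (A : Set ℕ) (hA : ∀ a ∈ A, 0 < a) (n : ℕ) :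
    n * pA A n = ∑ t ∈ Finset.Icc 1 n, sigmaA A t * pA A (n - t) := by
  have h := keyG A hA (fun a => a) n
  have hl : (∑ p : n.Partition, if (∀ x ∈ p.parts, x ∈ A)
        then ∑ a ∈ Finset.Icc 1 n, (fun a => a) a * p.parts.count a else 0) = n * pA A n := by
    rw [pA, Finset.mul_sum]
    refine Finset.sum_congr rfl fun p _ => ?_
    split_ifs with hc
    · rw [mul_one]
      calc ∑ a ∈ Finset.Icc 1 n, a * p.parts.count a
          = ∑ a ∈ Finset.Icc 1 n, p.parts.count a • a := by
            refine Finset.sum_congr rfl fun a _ => ?_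
            rw [smul_eq_mul, mul_comm]
        _ = p.parts.sum :=
            (Finset.sum_multiset_count_of_subset _ _ (parts_toFinset_subset p)).symm
        _ = n := p.parts_sum
    · simp
  rw [← hl, h]
  refine Finset.sum_congr rfl fun t _ => ?_
  rw [sigmaA]

lemma swapL (A : Set ℕ) (hA : ∀ a ∈ A, 0 < a) (n : ℕ) :
    (∑ t ∈ Finset.Icc 1 n, tauA A t *
        ∑ s ∈ Finset.Icc 1 (n - t), sigmaA A s * pA A (n - t - s)) =
    ∑ k ∈ Finset.Icc 1 (n - 1), NpA A k * sigmaA A (n - k) := by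
  have hleft : (∑ t ∈ Finset.Icc 1 n, tauA A t *
        ∑ s ∈ Finset.Icc 1 (n - t), sigmaA A s * pA A (n - t - s)) =
      ∑ x ∈ (Finset.Icc 1 n).sigma (fun t => (Finset.Icc 1 n).filter (fun s => t + s ≤ n)),
        tauA A x.1 * (sigmaA A x.2 * pA A (n - x.1 - x.2)) := by
    rw [Finset.sum_sigma]
    refine Finset.sum_congr rfl fun t ht => ?_
    rw [Finset.mem_Icc] at ht
    rw [Finset.mul_sum]
    refine (Finset.sum_congr ?_ fun s _ => rfl)
    ext s
    simp only [Finset.mem_filter, Finset.mem_Icc]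
    omega
  have hright : (∑ k ∈ Finset.Icc 1 (n - 1), NpA A k * sigmaA A (n - k)) =
      ∑ x ∈ (Finset.Icc 1 (n - 1)).sigma (fun k => (Finset.Icc 1 n).filter (fun u => u ≤ k)),
        tauA A x.2 * pA A (x.1 - x.2) * sigmaA A (n - x.1) := by
    rw [Finset.sum_sigma]
    refine Finset.sum_congr rfl fun k hk => ?_
    rw [Finset.mem_Icc] at hk
    rw [L1 A hA k, Finset.sum_mul]
    refine (Finset.sum_congr ?_ fun u _ => rfl)
    ext u
    simp only [Finset.mem_filter, Finset.mem_Icc]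
    omega
  rw [hleft, hright]
  refine Finset.sum_nbij' (i := fun x => (⟨n - x.2, x.1⟩ : Σ _ : ℕ, ℕ))
    (j := fun y => (⟨y.2, n - y.1⟩ : Σ _ : ℕ, ℕ)) ?_ ?_ ?_ ?_ ?_
  · rintro ⟨t, s⟩ hx
    simp only [Finset.mem_sigma, Finset.mem_filter, Finset.mem_Icc] at hx ⊢
    omega
  · rintro ⟨k, u⟩ hy
    simp only [Finset.mem_sigma, Finset.mem_filter, Finset.mem_Icc] at hy ⊢
    omega
  · rintro ⟨t, s⟩ hx
    simp only [Finset.mem_sigma, Finset.mem_filter, Finset.mem_Icc] at hx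
    dsimp only
    have h1 : n - (n - s) = s := by omega
    rw [h1]
  · rintro ⟨k, u⟩ hy
    simp only [Finset.mem_sigma, Finset.mem_filter, Finset.mem_Icc] at hy
    dsimp only
    have h1 : n - (n - k) = k := by omega
    rw [h1]
  · rintro ⟨t, s⟩ hx
    simp only [Finset.mem_sigma, Finset.mem_filter, Finset.mem_Icc] at hx
    simp only
    have h1 : n - (n - s) = s := by omega
    have h2 : n - s - t = n - t - s := by omega
    rw [h1, h2]
    ring

end Aux

theorem stmt13 (A : Set ℕ) (hA : ∀ a ∈ A, 0 < a) (n : ℕ) (hn : 0 < n) :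
    n * NpA A n =
      (∑ k ∈ Finset.Icc 1 (n - 1), NpA A k * sigmaA A (n - k)) +
        ∑ t ∈ Finset.Icc 1 n, t * tauA A t * pA A (n - t) := by
  rw [L1 A hA n, Finset.mul_sum]
  have key : ∀ t ∈ Finset.Icc 1 n, n * (tauA A t * pA A (n - t)) =
      t * tauA A t * pA A (n - t) +
        tauA A t * ∑ s ∈ Finset.Icc 1 (n - t), sigmaA A s * pA A (n - t - s) := by
    intro t ht
    rw [Finset.mem_Icc] at ht
    rw [← L2 A hA (n - t)]
    have hn' : n = t + (n - t) := by omega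
    calc n * (tauA A t * pA A (n - t))
        = (t + (n - t)) * (tauA A t * pA A (n - t)) := by rw [← hn']
      _ = t * tauA A t * pA A (n - t) + tauA A t * ((n - t) * pA A (n - t)) := by ring
  rw [Finset.sum_congr rfl key, Finset.sum_add_distrib, swapL A hA n, add_comm]
end
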